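/- arXiv:1810.03463 — 4 statements merged into one kernel-verified Lean document; each statement's English description precedes it below -/
import Mathlib

section
/- Let M > 0, p ∈ ℕ, and K ∈ ℕ, and let 𝔖(K) denote the set of all continuous functions f : [-M,M]^p → ℝ^K. Then the infimum over f ∈ 𝔖(K) of (1/(2M)^{2p}) ∫_{[-M,M]^p} ∫_{[-M,M]^p} | -‖x - x'‖₂² - ⟨f(x), f(x')⟩ | dx dx' is at least 2pM²/3. In particular, the inner-product similarity model cannot approximate the negative squared distance similarity arbitrarily well in L¹ average, regardless of the output dimension K. -/
/-! The kernel `(x, x') ↦ ⟪f x, f x'⟫` has double integral `‖∫ f‖² ≥ 0` over any set, hence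
`∫∫ |-‖x - x'‖² - ⟪f x, f x'⟫| ≥ ∫∫ (‖x - x'‖² + ⟪f x, f x'⟫) ≥ ∫∫ ‖x - x'‖²`. The variance identity
`∫∫ ‖x - x'‖² = 2 vol · ∫ ‖x‖² - 2 ‖∫ x‖²` evaluates the right-hand side on the cube, whose
coordinates are centred with second moment `M²/3` each, to `(2M)^{2p} · 2pM²/3`. -/

open MeasureTheory

section InnerKernel

variable {α F : Type*} [MeasurableSpace α] {μ : Measure α}
  [NormedAddCommGroup F] [InnerProductSpace ℝ F] [CompleteSpace F]

theorem integral_integral_inner {f : α → F} (hf : Integrable f μ) :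
    ∫ x, ∫ x', inner ℝ (f x) (f x') ∂μ ∂μ = ‖∫ x, f x ∂μ‖ ^ 2 := by
  simp_rw [integral_inner (𝕜 := ℝ) hf, real_inner_comm (∫ x, f x ∂μ),
    integral_inner (𝕜 := ℝ) hf, real_inner_self_eq_norm_sq]

theorem integral_integral_norm_sub_sq [IsFiniteMeasure μ] {f : α → F} (hf : Integrable f μ)
    (hf2 : Integrable (fun x => ‖f x‖ ^ 2) μ) :
    ∫ x, ∫ x', ‖f x - f x'‖ ^ 2 ∂μ ∂μ
      = 2 * μ.real Set.univ * ∫ x, ‖f x‖ ^ 2 ∂μ - 2 * ‖∫ x, f x ∂μ‖ ^ 2 := by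
  have inner_integral (x : α) : ∫ x', ‖f x - f x'‖ ^ 2 ∂μ
      = μ.real Set.univ * ‖f x‖ ^ 2 - 2 * inner ℝ (∫ x', f x' ∂μ) (f x)
        + ∫ x', ‖f x'‖ ^ 2 ∂μ := by
    simp_rw [norm_sub_sq_real]
    rw [integral_add _ hf2, integral_sub (integrable_const _), integral_const_mul,
      integral_inner hf, integral_const, smul_eq_mul, real_inner_comm]
    exacts [(hf.const_inner (f x)).const_mul 2,
      (integrable_const _).sub ((hf.const_inner (f x)).const_mul 2)]
  simp_rw [inner_integral]
  rw [integral_add _ (integrable_const _), integral_sub (hf2.const_mul _), integral_const_mul,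
    integral_const_mul, integral_inner hf, integral_const, smul_eq_mul, real_inner_self_eq_norm_sq]
  · ring
  exacts [(hf.const_inner _).const_mul 2, (hf2.const_mul _).sub ((hf.const_inner _).const_mul 2)]

end InnerKernel

section CompactDomain

variable {X F : Type*} [TopologicalSpace X] [T2Space X] [SecondCountableTopology X]
  [MeasurableSpace X] [BorelSpace X] {μ : Measure X} [SFinite μ] [IsFiniteMeasureOnCompacts μ]
  {S : Set X} [NormedAddCommGroup F] [InnerProductSpace ℝ F] [CompleteSpace F]

theorem Continuous.integrable_prod_restrict {g : X × X → ℝ} (hg : Continuous g)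
    (hS : IsCompact S) : Integrable g ((μ.restrict S).prod (μ.restrict S)) := by
  rw [Measure.prod_restrict]
  exact hg.continuousOn.integrableOn_compact (hS.prod hS)

theorem neg_integral_integral_le_integral_integral_abs_sub_inner {h : X → X → ℝ}
    (hh : Continuous (Function.uncurry h)) {f : X → F} (hf : Continuous f) (hS : IsCompact S) :
    -∫ x in S, ∫ x' in S, h x x' ∂μ ∂μ
      ≤ ∫ x in S, ∫ x' in S, |h x x' - inner ℝ (f x) (f x')| ∂μ ∂μ := by
  set ρ := (μ.restrict S).prod (μ.restrict S)
  set k : X → X → ℝ := fun x x' => inner ℝ (f x) (f x')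
  have hk : Continuous (Function.uncurry k) := by fun_prop
  have hh' : Integrable (fun z : X × X => h z.1 z.2) ρ := hh.integrable_prod_restrict hS
  have hk' : Integrable (fun z : X × X => k z.1 z.2) ρ := hk.integrable_prod_restrict hS
  have kernel_nonneg : 0 ≤ ∫ z, k z.1 z.2 ∂ρ := by
    rw [← integral_integral (f := k) hk',
      integral_integral_inner (hf.continuousOn.integrableOn_compact hS)]
    positivity
  rw [integral_integral (f := h) hh',
    integral_integral (f := fun x x' => |h x x' - k x x'|)
      ((hh.sub hk).abs.integrable_prod_restrict hS)]
  calc -∫ z, h z.1 z.2 ∂ρ ≤ ∫ z, -(h z.1 z.2 - k z.1 z.2) ∂ρ := by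
        rw [integral_neg, integral_sub hh' hk']
        linarith
    _ ≤ _ := integral_mono (hh'.sub hk').neg (hh'.sub hk').abs fun z => neg_le_abs _

end CompactDomain

def cube (p : ℕ) (M : ℝ) : Set (EuclideanSpace ℝ (Fin p)) := {x | ∀ i, |x i| ≤ M}

namespace cube

variable {p : ℕ} {M : ℝ}

theorem eq_preimage_pi (p : ℕ) (M : ℝ) :
    cube p M = (MeasurableEquiv.toLp 2 (Fin p → ℝ)).symm ⁻¹'
      Set.univ.pi fun _ => Set.Icc (-M) M := by
  ext x
  simp only [cube, Set.mem_ofPred_eq, Set.mem_preimage, Set.mem_pi, Set.mem_univ, true_implies,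
    Set.mem_Icc, abs_le, MeasurableEquiv.toLp_symm_apply]

theorem isCompact (p : ℕ) (M : ℝ) : IsCompact (cube p M) := by
  rw [eq_preimage_pi]
  exact (PiLp.continuousLinearEquiv 2 ℝ _).toHomeomorph.isCompact_preimage.2
    (isCompact_univ_pi fun _ => isCompact_Icc)

theorem setIntegral_eq_integral_pi (g : (Fin p → ℝ) → ℝ) :
    ∫ x in cube p M, g x.ofLp
      = ∫ y, g y ∂Measure.pi fun _ => volume.restrict (Set.Icc (-M) M) := by
  rw [eq_preimage_pi, ← Measure.restrict_pi_pi, ← volume_pi]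
  exact (EuclideanSpace.volume_preserving_symm_measurableEquiv_toLp (Fin p)
    ).setIntegral_preimage_emb (MeasurableEquiv.measurableEmbedding _) g _

theorem setIntegral_comp_apply (hM : 0 ≤ M) (i : Fin p) (u : ℝ → ℝ) :
    ∫ x in cube p M, u (x i) = (2 * M) ^ (p - 1) * ∫ s in Set.Icc (-M) M, u s := by
  classical
  -- Writing `u (y i)` as a product integrand, all of whose factors but the `i`-th are `1`,
  -- lets Fubini for product integrands do the work.
  have hprod (y : Fin p → ℝ) : u (y i) = ∏ j, (if j = i then u else fun _ => 1) (y j) := by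
    simp [ite_apply]
  have hfactor (j : Fin p) : ∫ s in Set.Icc (-M) M, (if j = i then u else fun _ => 1) s
      = if j = i then ∫ s in Set.Icc (-M) M, u s else 2 * M := by
    split_ifs
    · rfl
    · simp [hM, two_mul]
  simp_rw [setIntegral_eq_integral_pi (fun y => u (y i)), hprod, integral_fintype_prod_eq_prod,
    hfactor]
  rw [Finset.prod_ite]
  simp [Finset.filter_eq', Finset.filter_ne', mul_comm]

theorem volume_real (hM : 0 ≤ M) : volume.real (cube p M) = (2 * M) ^ p := by
  rw [eq_preimage_pi, measureReal_def,
    (EuclideanSpace.volume_preserving_symm_measurableEquiv_toLp (Fin p)).measure_preimage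
      (MeasurableSet.univ_pi fun _ => measurableSet_Icc).nullMeasurableSet, volume_pi_pi]
  simp [hM, two_mul]

theorem setIntegral_id (hM : 0 ≤ M) : ∫ x in cube p M, x = 0 := by
  ext i
  have hint : IntegrableOn (fun x : EuclideanSpace ℝ (Fin p) => x) (cube p M) :=
    continuous_id.continuousOn.integrableOn_compact (isCompact p M)
  have hproj := (EuclideanSpace.proj (𝕜 := ℝ) i).integral_comp_comm hint
  simp only [EuclideanSpace.coe_proj] at hproj
  rw [← hproj, setIntegral_comp_apply hM i (fun s => s), integral_Icc_eq_integral_Ioc,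
    ← intervalIntegral.integral_of_le (by linarith), integral_id]
  simp

theorem setIntegral_norm_sq (hM : 0 ≤ M) :
    ∫ x in cube p M, ‖x‖ ^ 2 = p * (2 * M) ^ p * (M ^ 2 / 3) := by
  have hint (i : Fin p) :
      IntegrableOn (fun x : EuclideanSpace ℝ (Fin p) => ‖x i‖ ^ 2) (cube p M) :=
    (by fun_prop : Continuous fun x : EuclideanSpace ℝ (Fin p) => ‖x i‖ ^ 2
      ).continuousOn.integrableOn_compact (isCompact p M)
  simp_rw [EuclideanSpace.norm_sq_eq, integral_finsetSum _ fun i _ => hint i, Real.norm_eq_abs,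
    sq_abs]
  have hcoord (i : Fin p) : ∫ x in cube p M, x i ^ 2 = (2 * M) ^ p * (M ^ 2 / 3) := by
    have hp : (2 * M) ^ p = (2 * M) ^ (p - 1) * (2 * M) := by
      rw [← pow_succ, Nat.sub_add_cancel i.pos]
    rw [setIntegral_comp_apply hM i (· ^ 2), integral_Icc_eq_integral_Ioc,
      ← intervalIntegral.integral_of_le (by linarith), integral_pow, hp]
    ring
  simp [hcoord, mul_assoc]

theorem integral_integral_norm_sub_sq (hM : 0 ≤ M) :
    ∫ x in cube p M, ∫ x' in cube p M, ‖x - x'‖ ^ 2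
      = (2 * M) ^ (2 * p) * (2 * p * M ^ 2 / 3) := by
  have : IsFiniteMeasure (volume.restrict (cube p M)) :=
    isFiniteMeasure_restrict.2 (isCompact p M).measure_lt_top.ne
  have hvar := _root_.integral_integral_norm_sub_sq (μ := volume.restrict (cube p M)) (f := id)
    (continuous_id.continuousOn.integrableOn_compact (isCompact p M))
    ((continuous_norm.pow 2).continuousOn.integrableOn_compact (isCompact p M))
  simp only [id_eq] at hvar
  rw [hvar, measureReal_restrict_apply_univ, volume_real hM, setIntegral_id hM,
    setIntegral_norm_sq hM, norm_zero, pow_mul']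
  ring

end cube

/-- The inner-product similarity model cannot approximate the negative squared distance
similarity arbitrarily well in `L¹` average over the cube `[-M,M]ᵖ`, regardless of the
output dimension `K`: for every continuous `f : [-M,M]ᵖ → ℝᴷ`,
`(1/(2M)^{2p}) ∬ |-‖x - x'‖₂² - ⟨f(x), f(x')⟩| dx dx' ≥ 2pM²/3`. -/
theorem ips_l1_lower_bound_for_nsd (p K : ℕ) (M : ℝ) (hM : 0 < M)
    (f : EuclideanSpace ℝ (Fin p) → EuclideanSpace ℝ (Fin K)) (hf : Continuous f) :
    2 * p * M ^ 2 / 3 ≤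
      (1 / (2 * M) ^ (2 * p)) *
        ∫ x in {x : EuclideanSpace ℝ (Fin p) | ∀ i, |x i| ≤ M},
          ∫ x' in {x : EuclideanSpace ℝ (Fin p) | ∀ i, |x i| ≤ M},
            |(-‖x - x'‖ ^ 2 - (inner ℝ (f x) (f x') : ℝ))| := by
  have hdist := neg_integral_integral_le_integral_integral_abs_sub_inner (μ := volume)
    (h := fun x x' => -‖x - x'‖ ^ 2) (by fun_prop) hf (cube.isCompact p M)
  simp only [integral_neg, neg_neg, cube.integral_integral_norm_sub_sq hM.le] at hdist
  rw [one_div, le_inv_mul_iff₀ (by positivity)]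
  exact hdist
end

section
/- (Approximation theorem for IPS.) Let X = [-M,M]^p with M > 0, let Y ⊂ ℝ^{K*} be a compact set for some K* ∈ ℕ, let f* : X → Y be continuous, and let g* : Y × Y → ℝ be a positive definite kernel. Let σ : ℝ → ℝ be either the ReLU function or a non-constant, continuous, bounded, monotonically increasing function. Then for every ε > 0 there exist K ∈ ℕ, m ∈ ℕ, and matrices A ∈ ℝ^{K×m}, B ∈ ℝ^{m×p}, and a vector c ∈ ℝ^m such that, writing f_NN(x) = A σ(B x + c) with σ applied elementwise, |g*(f*(x), f*(x')) − ⟨f_NN(x), f_NN(x')⟩| < ε for all (x, x') ∈ X × X. -/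
/-
Cover `Y` by finitely many balls `B(yᵢ, δ/2)` on which `g` varies by less than `ε`, and take a
subordinate partition of unity `ρ`. Then `g y y'` is close to `ρ(y) ⬝ G ρ(y')`, where
`G = (g yᵢ yⱼ)` is positive semidefinite; writing `G = Lᵀ L`, this is the inner product of the
continuous features `φ = L ρ`. It remains to approximate each `φₖ ∘ f*` uniformly on the cube by
a network: stacking these networks gives one hidden layer, and inner products move little under
uniformly small perturbations of a compact set of vectors. By Stone–Weierstrass, combinations of
the exponentials `x ↦ exp (a ⬝ x)` are dense, and each is a function of the single variable
`a ⬝ x`. Continuous functions of one variable are approximated by smoothed staircases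
`∑ⱼ dⱼ τ (λ (t - mⱼ))`, where `τ` is sigmoidal and a combination of translates of `σ`:
`τ = (σ - inf σ) / (sup σ - inf σ)` for monotone bounded `σ`, `τ u = relu u - relu (u - 1)`
for ReLU.
-/

open Filter Topology Matrix Submodule

theorem abs_sub_sum_mul_le_of_sum_eq_one {ι : Type*} [Fintype ι] {w x : ι → ℝ} {c ε : ℝ}
    (hw : ∀ i, 0 ≤ w i) (hw_sum : ∑ i, w i = 1) (hx : ∀ i, w i ≠ 0 → |c - x i| ≤ ε) :
    |c - ∑ i, w i * x i| ≤ ε := by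
  have hsplit : c - ∑ i, w i * x i = ∑ i, w i * (c - x i) := by
    simp only [mul_sub, Finset.sum_sub_distrib, ← Finset.sum_mul, hw_sum, one_mul]
  calc |c - ∑ i, w i * x i| ≤ ∑ i, w i * |c - x i| := by
        rw [hsplit]
        refine (Finset.abs_sum_le_sum_abs _ _).trans_eq ?_
        simp only [abs_mul, abs_of_nonneg (hw _)]
    _ ≤ ∑ i, w i * ε := Finset.sum_le_sum fun i _ => by
        rcases eq_or_ne (w i) 0 with h | h
        · simp [h]
        · exact mul_le_mul_of_nonneg_left (hx i h) (hw i)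
    _ = ε := by rw [← Finset.sum_mul, hw_sum, one_mul]

theorem exists_eq_transpose_mul_self_of_sum_mul_mul_nonneg {n : Type*} [Fintype n]
    {G : Matrix n n ℝ} (hG_symm : G.IsSymm)
    (hG : ∀ c : n → ℝ, 0 ≤ ∑ i, ∑ j, c i * c j * G i j) :
    ∃ L : Matrix n n ℝ, G = Lᵀ * L := by
  have hpsd : G.PosSemidef := by
    refine .of_dotProduct_mulVec_nonneg hG_symm fun c => (hG c).trans_eq ?_
    simp only [star_trivial, dotProduct, mulVec, Finset.mul_sum]
    exact Finset.sum_congr rfl fun i _ => Finset.sum_congr rfl fun j _ => by ring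
  classical
  open scoped MatrixOrder in
  simpa [star_eq_conjTranspose, conjTranspose_eq_transpose_of_trivial] using
    CStarAlgebra.nonneg_iff_eq_star_mul_self.mp hpsd.nonneg

theorem dotProduct_transpose_mul_self_mulVec {n : Type*} [Fintype n] (L : Matrix n n ℝ)
    (r r' : n → ℝ) : r ⬝ᵥ (Lᵀ * L) *ᵥ r' = (L *ᵥ r) ⬝ᵥ (L *ᵥ r') := by
  rw [← mulVec_mulVec, dotProduct_mulVec, vecMul_transpose]

theorem exists_features_near_kernel {X : Type*} [MetricSpace X] {Y : Set X} (hY : IsCompact Y)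
    {g : X → X → ℝ} (hg_symm : ∀ y ∈ Y, ∀ y' ∈ Y, g y y' = g y' y)
    (hg_cont : ContinuousOn (fun yy : X × X => g yy.1 yy.2) (Y ×ˢ Y))
    (hg_pd : ∀ (n : ℕ) (c : Fin n → ℝ) (y : Fin n → X), (∀ i, y i ∈ Y) →
      0 ≤ ∑ i, ∑ j, c i * c j * g (y i) (y j))
    {ε : ℝ} (hε : 0 < ε) :
    ∃ (n : ℕ) (φ : Fin n → C(X, ℝ)), ∀ y ∈ Y, ∀ y' ∈ Y, |g y y' - ∑ k, φ k y * φ k y'| ≤ ε := by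
  obtain ⟨δ, hδ, hg_uc⟩ := Metric.uniformContinuousOn_iff.mp
    ((hY.prod hY).uniformContinuousOn_of_continuous hg_cont) ε hε
  obtain ⟨t, htY, ht, hcover⟩ := finite_cover_balls_of_compact hY (half_pos hδ)
  obtain ⟨n, z, rfl⟩ := ht.fin_embedding
  rw [Set.biUnion_range] at hcover
  have hzY : ∀ i, z i ∈ Y := fun i => htY (Set.mem_range_self i)
  obtain ⟨ρ, hρ⟩ := PartitionOfUnity.exists_isSubordinate hY.isClosed _
    (fun i => Metric.isOpen_ball) hcover
  set G : Matrix (Fin n) (Fin n) ℝ := Matrix.of fun i j => g (z i) (z j)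
  obtain ⟨L, hL⟩ := exists_eq_transpose_mul_self_of_sum_mul_mul_nonneg (G := G)
    (Matrix.ext fun i j => hg_symm _ (hzY j) _ (hzY i)) fun c => hg_pd n c z hzY
  refine ⟨n, fun k => ∑ i, L k i • ρ i, fun y hy y' hy' => ?_⟩
  have hfeatures : ∑ k, (∑ i, L k i • ρ i) y * (∑ i, L k i • ρ i) y'
      = (fun i => ρ i y) ⬝ᵥ G *ᵥ fun j => ρ j y' := by
    rw [hL, dotProduct_transpose_mul_self_mulVec]
    simp [dotProduct, mulVec]
  have hnear : ∀ i j, ρ i y ≠ 0 → ρ j y' ≠ 0 → |g y y' - G i j| ≤ ε := by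
    intro i j hi hj
    have hyi := Metric.mem_ball.mp (hρ i (subset_tsupport _ hi))
    have hyj := Metric.mem_ball.mp (hρ j (subset_tsupport _ hj))
    refine (hg_uc _ (Set.mk_mem_prod hy hy') _ (Set.mk_mem_prod (hzY i) (hzY j)) ?_).le
    rw [Prod.dist_eq]
    exact max_lt (by linarith) (by linarith)
  have hsum : ∀ x ∈ Y, ∑ i, ρ i x = 1 := fun x hx => by
    rw [← finsum_eq_sum_of_fintype]
    exact ρ.sum_eq_one hx
  rw [hfeatures]
  refine abs_sub_sum_mul_le_of_sum_eq_one (fun i => ρ.nonneg i y) (hsum y hy) fun i hi => ?_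
  simp only [mulVec, dotProduct_comm (fun j => G i j)]
  exact abs_sub_sum_mul_le_of_sum_eq_one (fun j => ρ.nonneg j y') (hsum y' hy')
    fun j hj => hnear i j hi hj

def ridge₁ (σ : ℝ → ℝ) (θ : ℝ × ℝ) (t : ℝ) : ℝ := σ (θ.1 * t + θ.2)

def UniversalOnIntervals (σ : ℝ → ℝ) : Prop :=
  ∀ f : ℝ → ℝ, Continuous f → ∀ a b ε : ℝ, 0 < ε →
    ∃ F ∈ span ℝ (Set.range (ridge₁ σ)), ∀ t ∈ Set.Icc a b, |f t - F t| < ε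

theorem UniversalOnIntervals.of_range_subset_span {σ τ : ℝ → ℝ} (hτ : UniversalOnIntervals τ)
    (hτσ : Set.range (ridge₁ τ) ⊆ span ℝ (Set.range (ridge₁ σ))) : UniversalOnIntervals σ :=
  fun f hf a b ε hε =>
    let ⟨F, hF_mem, hF⟩ := hτ f hf a b ε hε
    ⟨F, span_le.mpr hτσ hF_mem, hF⟩

theorem const_mem_span_ridge₁ {σ : ℝ → ℝ} {z : ℝ} (hz : σ z ≠ 0) (r : ℝ) :
    (fun _ => r) ∈ span ℝ (Set.range (ridge₁ σ)) := by
  have : (fun _ : ℝ => r) = (r / σ z) • ridge₁ σ (0, z) := by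
    funext t
    simp [ridge₁, div_mul_cancel₀ _ hz]
  rw [this]
  exact smul_mem _ _ (subset_span ⟨_, rfl⟩)

theorem abs_sum_range_sub_sum_range_mul_le {d v : ℕ → ℝ} {k N : ℕ} (hkN : k < N) {η θ C : ℝ}
    (hd : ∀ j < N, |d j| ≤ η) (hv_lt : ∀ j < k, |1 - v j| ≤ θ)
    (hv_gt : ∀ j, k < j → |v j| ≤ θ) (hv_k : |v k| ≤ C) :
    |∑ j ∈ Finset.range k, d j - ∑ j ∈ Finset.range N, d j * v j| ≤ η * (N * θ + C) := by
  have hθ : 0 ≤ θ := (abs_nonneg _).trans (hv_gt (k + 1) k.lt_succ_self)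
  have hη : 0 ≤ η := (abs_nonneg _).trans (hd k hkN)
  have hstep : ∑ j ∈ Finset.range k, d j
      = ∑ j ∈ Finset.range N, d j * if j < k then 1 else 0 := by
    simp only [mul_ite, mul_one, mul_zero, ← Finset.sum_filter]
    congr 1
    ext j
    simp only [Finset.mem_range, Finset.mem_filter]
    omega
  have hterm : ∀ j ∈ Finset.range N, |d j * (if j < k then 1 else 0) - d j * v j|
      ≤ η * θ + if j = k then η * C else 0 := by
    intro j hj
    rw [← mul_sub, abs_mul]
    have hdj := hd j (Finset.mem_range.mp hj)
    rcases lt_trichotomy j k with hjk | rfl | hjk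
    · simpa [hjk, hjk.ne] using mul_le_mul hdj (hv_lt j hjk) (abs_nonneg _) hη
    · simpa using (mul_le_mul hdj hv_k (abs_nonneg _) hη).trans
        (le_add_of_nonneg_left (by positivity))
    · simpa [hjk.not_gt, hjk.ne'] using mul_le_mul hdj (hv_gt j hjk) (abs_nonneg _) hη
  rw [hstep, ← Finset.sum_sub_distrib]
  refine (Finset.abs_sum_le_sum_abs _ _).trans ((Finset.sum_le_sum hterm).trans_eq ?_)
  rw [Finset.sum_add_distrib, Finset.sum_ite_eq' _ _ _, if_pos (Finset.mem_range.mpr hkN),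
    Finset.sum_const, Finset.card_range, nsmul_eq_mul]
  ring

noncomputable def staircase (τ f : ℝ → ℝ) (a h lam : ℝ) (N : ℕ) (t : ℝ) : ℝ :=
  f a + ∑ j ∈ Finset.range N,
    (f (a + (j + 1) * h) - f (a + j * h)) * τ (lam * (t - (a + j * h + h / 2)))

theorem staircase_mem_span_ridge₁ {τ : ℝ → ℝ} {z : ℝ} (hz : τ z ≠ 0) (f : ℝ → ℝ) (a h lam : ℝ)
    (N : ℕ) : staircase τ f a h lam N ∈ span ℝ (Set.range (ridge₁ τ)) := by
  have : staircase τ f a h lam N = (fun _ => f a) + ∑ j ∈ Finset.range N,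
      (f (a + (j + 1) * h) - f (a + j * h)) • ridge₁ τ (lam, -(lam * (a + j * h + h / 2))) := by
    ext t
    simp only [staircase, Pi.add_apply, Finset.sum_apply, Pi.smul_apply, smul_eq_mul, ridge₁]
    congr 1
    exact Finset.sum_congr rfl fun j _ => by rw [mul_sub, sub_eq_add_neg (lam * t)]
  rw [this]
  exact add_mem (const_mem_span_ridge₁ hz _)
    (sum_mem fun j _ => smul_mem _ _ (subset_span ⟨_, rfl⟩))

theorem abs_sub_staircase_le {f τ : ℝ → ℝ} {a h t lam θ η C : ℝ} {k N : ℕ}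
    (hlam : 0 ≤ lam) (hkN : k < N) (hkt : a + k * h ≤ t) (htk : t < a + (k + 1) * h)
    (hd : ∀ j < N, |f (a + (j + 1) * h) - f (a + j * h)| ≤ η) (hfk : |f t - f (a + k * h)| ≤ η)
    (hτ_top : ∀ u, lam * (h / 2) ≤ u → |1 - τ u| ≤ θ)
    (hτ_bot : ∀ u, u ≤ -(lam * (h / 2)) → |τ u| ≤ θ) (hC : ∀ u, |τ u| ≤ C) :
    |f t - staircase τ f a h lam N t| ≤ η + η * (N * θ + C) := by
  have hh : 0 < h := by linarith
  have htel : f a + ∑ j ∈ Finset.range k, (f (a + (j + 1) * h) - f (a + j * h))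
      = f (a + k * h) := by
    have := Finset.sum_range_sub (fun j : ℕ => f (a + j * h)) k
    push_cast at this
    rw [this]
    simp
  have hv_lt : ∀ j < k, |1 - τ (lam * (t - (a + j * h + h / 2)))| ≤ θ := by
    intro j hj
    refine hτ_top _ (mul_le_mul_of_nonneg_left ?_ hlam)
    have : (j : ℝ) + 1 ≤ k := by exact_mod_cast hj
    nlinarith
  have hv_gt : ∀ j, k < j → |τ (lam * (t - (a + j * h + h / 2)))| ≤ θ := by
    intro j hj
    refine hτ_bot _ ?_
    rw [← mul_neg]
    refine mul_le_mul_of_nonneg_left ?_ hlam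
    have : (k : ℝ) + 1 ≤ j := by exact_mod_cast hj
    nlinarith
  have hsum := abs_sum_range_sub_sum_range_mul_le hkN hd hv_lt hv_gt (hC _)
  rw [← htel] at hfk
  unfold staircase
  exact (abs_sub_le _ _ _).trans (add_le_add hfk (by rwa [add_sub_add_left_eq_sub]))

theorem exists_forall_abs_sub_heaviside_le {τ : ℝ → ℝ} (h_bot : Tendsto τ atBot (𝓝 0))
    (h_top : Tendsto τ atTop (𝓝 1)) {θ : ℝ} (hθ : 0 < θ) :
    ∃ W, 0 ≤ W ∧ (∀ u, W ≤ u → |1 - τ u| ≤ θ) ∧ ∀ u, u ≤ -W → |τ u| ≤ θ := by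
  obtain ⟨W₁, hW₁⟩ := eventually_atTop.mp (h_top.eventually (Metric.closedBall_mem_nhds 1 hθ))
  obtain ⟨W₂, hW₂⟩ := eventually_atBot.mp (h_bot.eventually (Metric.closedBall_mem_nhds 0 hθ))
  refine ⟨max (max W₁ (-W₂)) 0, le_max_right _ _, fun u hu => ?_, fun u hu => ?_⟩
  · simpa [Real.dist_eq, abs_sub_comm] using hW₁ u (by grind)
  · simpa [Real.dist_eq] using hW₂ u (by grind)

theorem exists_lt_floor_add_one_and_mem_Ico {a b h t : ℝ} (hh : 0 < h) (ht : t ∈ Set.Icc a b) :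
    ∃ k < ⌊(b - a) / h⌋₊ + 1, a + k * h ≤ t ∧ t < a + (k + 1) * h := by
  have h0 : 0 ≤ (t - a) / h := div_nonneg (by linarith [ht.1]) hh.le
  have hle := (le_div_iff₀ hh).mp (Nat.floor_le h0)
  have hlt := (div_lt_iff₀ hh).mp (Nat.lt_floor_add_one ((t - a) / h))
  refine ⟨⌊(t - a) / h⌋₊, Nat.lt_succ_of_le (Nat.floor_le_floor (by gcongr; exact ht.2)), ?_, ?_⟩
  <;> linarith

theorem add_mul_mem_Icc_of_le_floor_add_one {a b h : ℝ} (hh : 0 < h) (hab : a ≤ b) {j : ℕ}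
    (hj : j ≤ ⌊(b - a) / h⌋₊ + 1) : a + j * h ∈ Set.Icc a (b + h) := by
  have hfloor := Nat.floor_le (div_nonneg (sub_nonneg.mpr hab) hh.le)
  have hj' : (j : ℝ) ≤ ⌊(b - a) / h⌋₊ + 1 := by exact_mod_cast hj
  have hjh : (j : ℝ) * h ≤ b - a + h :=
    calc (j : ℝ) * h ≤ ((b - a) / h + 1) * h := by gcongr; linarith
      _ = b - a + h := by field_simp
  constructor <;> nlinarith

theorem universalOnIntervals_of_tendsto {τ : ℝ → ℝ} (h_bot : Tendsto τ atBot (𝓝 0))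
    (h_top : Tendsto τ atTop (𝓝 1)) {C : ℝ} (hC : ∀ u, |τ u| ≤ C) :
    UniversalOnIntervals τ := by
  intro f hf a b ε hε
  have hC0 : 0 ≤ C := (abs_nonneg _).trans (hC 0)
  set η := ε / (C + 3)
  obtain ⟨h, hh, hh1, hf_near⟩ : ∃ h, 0 < h ∧ h ≤ 1 ∧ ∀ x ∈ Set.Icc a (b + 1),
      ∀ y ∈ Set.Icc a (b + 1), |x - y| ≤ h → |f x - f y| ≤ η := by
    obtain ⟨δ, hδ, hf_uc⟩ := Metric.uniformContinuousOn_iff.mp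
      ((isCompact_Icc (a := a) (b := b + 1)).uniformContinuousOn_of_continuous hf.continuousOn)
      η (by positivity)
    refine ⟨min (δ / 2) 1, by positivity, min_le_right _ _, fun x hx y hy hxy => ?_⟩
    exact (hf_uc x hx y hy (by rw [Real.dist_eq]; linarith [min_le_left (δ / 2) 1])).le
  set N := ⌊(b - a) / h⌋₊ + 1
  obtain ⟨W, hW, hW_top, hW_bot⟩ :=
    exists_forall_abs_sub_heaviside_le h_bot h_top (θ := 1 / N) (by positivity)
  set lam := 2 * W / h
  have hlam_h : lam * (h / 2) = W := by
    simp only [lam]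
    field_simp
  obtain ⟨z, hz⟩ : ∃ z, τ z ≠ 0 := (h_top.eventually_ne one_ne_zero).exists
  refine ⟨staircase τ f a h lam N, staircase_mem_span_ridge₁ hz f a h lam N,
    fun t ⟨hat, htb⟩ => ?_⟩
  have hnode : ∀ j ≤ N, a + j * h ∈ Set.Icc a (b + 1) := fun j hj =>
    Set.Icc_subset_Icc_right (by linarith)
      (add_mul_mem_Icc_of_le_floor_add_one hh (hat.trans htb) hj)
  obtain ⟨k, hkN, hkt, htk⟩ := exists_lt_floor_add_one_and_mem_Ico hh ⟨hat, htb⟩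
  refine (abs_sub_staircase_le (by positivity) hkN hkt htk
    (fun j hj => by
      simpa using hf_near _ (hnode _ hj) _ (hnode _ hj.le) (by simp [add_mul, abs_of_pos hh]))
    (hf_near _ ⟨hat, by linarith⟩ _ (hnode _ hkN.le)
      (by rw [abs_of_nonneg (by linarith)]; linarith))
    (hlam_h ▸ hW_top) (hlam_h ▸ hW_bot) hC).trans_lt ?_
  rw [mul_one_div_cancel (by positivity)]
  simp only [η]
  field_simp
  linarith

theorem universalOnIntervals_relu : UniversalOnIntervals fun z => max 0 z := by
  refine (universalOnIntervals_of_tendsto (τ := fun u => max 0 u - max 0 (u - 1)) ?_ ?_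
    (C := 1) fun u => ?_).of_range_subset_span ?_
  · refine tendsto_const_nhds.congr' ?_
    filter_upwards [eventually_le_atBot 0] with u hu
    simp [hu, (by linarith : u - 1 ≤ 0)]
  · refine tendsto_const_nhds.congr' ?_
    filter_upwards [eventually_ge_atTop 1] with u hu
    simp [max_eq_right (by linarith : (0 : ℝ) ≤ u), max_eq_right (by linarith : (0 : ℝ) ≤ u - 1)]
  · rw [abs_le]
    constructor <;> simp only [max_def] <;> split_ifs <;> linarith
  · rintro _ ⟨θ, rfl⟩
    have : ridge₁ (fun u => max 0 u - max 0 (u - 1)) θ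
        = ridge₁ (fun z => max 0 z) θ - ridge₁ (fun z => max 0 z) (θ.1, θ.2 - 1) := by
      ext t
      simp [ridge₁, add_sub_assoc]
    rw [this]
    exact sub_mem (subset_span ⟨_, rfl⟩) (subset_span ⟨_, rfl⟩)

theorem universalOnIntervals_of_monotone {σ : ℝ → ℝ} (hσ_mono : Monotone σ)
    (hσ_bdd : ∃ C, ∀ z, |σ z| ≤ C) (hσ_ne : ∃ a b, σ a ≠ σ b) : UniversalOnIntervals σ := by
  obtain ⟨C, hC⟩ := hσ_bdd
  have hbddA : BddAbove (Set.range σ) := ⟨C, by rintro _ ⟨z, rfl⟩; exact (abs_le.mp (hC z)).2⟩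
  have hbddB : BddBelow (Set.range σ) := ⟨-C, by rintro _ ⟨z, rfl⟩; exact (abs_le.mp (hC z)).1⟩
  obtain ⟨a, b, hab⟩ := hσ_ne
  set D := (⨆ z, σ z) - ⨅ z, σ z
  have hD : 0 < D := by
    rcases le_total a b with h | h
    · linarith [(hσ_mono h).lt_of_ne hab, ciInf_le hbddB a, le_ciSup hbddA b]
    · linarith [(hσ_mono h).lt_of_ne hab.symm, ciInf_le hbddB b, le_ciSup hbddA a]
  obtain ⟨z, hz⟩ : ∃ z, σ z ≠ 0 := by
    by_contra! h
    exact hab ((h a).trans (h b).symm)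
  refine (universalOnIntervals_of_tendsto (τ := fun u => D⁻¹ * σ u + -(D⁻¹ * ⨅ z, σ z))
    ?_ ?_ (C := 1) fun u => ?_).of_range_subset_span ?_
  · convert ((tendsto_atBot_ciInf hσ_mono hbddB).const_mul D⁻¹).add_const (-(D⁻¹ * ⨅ z, σ z))
    ring
  · convert ((tendsto_atTop_ciSup hσ_mono hbddA).const_mul D⁻¹).add_const (-(D⁻¹ * ⨅ z, σ z))
    field_simp
    ring
  · have hτ : D⁻¹ * σ u + -(D⁻¹ * ⨅ z, σ z) = (σ u - ⨅ z, σ z) / D := by ring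
    rw [hτ, abs_le, le_div_iff₀ hD, div_le_iff₀ hD]
    constructor <;> linarith [ciInf_le hbddB u, le_ciSup hbddA u]
  · rintro _ ⟨θ, rfl⟩
    exact add_mem (smul_mem _ D⁻¹ (subset_span ⟨θ, rfl⟩)) (const_mem_span_ridge₁ hz _)

theorem continuous_of_mem_span {X : Type*} [TopologicalSpace X] {s : Set (X → ℝ)}
    (hs : ∀ f ∈ s, Continuous f) {F : X → ℝ} (hF : F ∈ span ℝ s) : Continuous F := by
  induction hF using span_induction with
  | mem f hf => exact hs f hf
  | zero => exact continuous_const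
  | add f g _ _ hf hg => exact hf.add hg
  | smul r f _ hf => exact hf.const_smul r

section

variable {ι : Type*} [Fintype ι]

def ridge (σ : ℝ → ℝ) (θ : (ι → ℝ) × ℝ) (x : ι → ℝ) : ℝ :=
  σ (θ.1 ⬝ᵥ x + θ.2)

theorem comp_dotProduct_mem_span_ridge {σ F : ℝ → ℝ}
    (hF : F ∈ span ℝ (Set.range (ridge₁ σ))) (a : ι → ℝ) :
    (fun x => F (a ⬝ᵥ x)) ∈ span ℝ (Set.range (ridge σ : _ → (ι → ℝ) → ℝ)) := by
  have hmap := mem_map_of_mem (f := LinearMap.funLeft ℝ ℝ (a ⬝ᵥ ·)) hF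
  rw [map_span] at hmap
  refine span_mono ?_ hmap
  rintro _ ⟨_, ⟨θ, rfl⟩, rfl⟩
  exact ⟨(θ.1 • a, θ.2), by ext x; simp [ridge, ridge₁, smul_dotProduct]⟩

theorem exists_mem_span_ridge_near_exp_dotProduct {σ : ℝ → ℝ}
    (hσ : UniversalOnIntervals σ) {K : Set (ι → ℝ)} (hK : IsCompact K) (a : ι → ℝ) {ε : ℝ}
    (hε : 0 < ε) :
    ∃ F ∈ span ℝ (Set.range (ridge σ)), ∀ x ∈ K, |Real.exp (a ⬝ᵥ x) - F x| < ε := by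
  obtain ⟨R, hR⟩ := hK.exists_bound_of_continuousOn (f := (a ⬝ᵥ ·)) (by fun_prop)
  obtain ⟨F, hF_mem, hF⟩ := hσ Real.exp Real.continuous_exp (-R) R ε hε
  exact ⟨_, comp_dotProduct_mem_span_ridge hF_mem a, fun x hx => hF _ (abs_le.mp (hR x hx))⟩

/-- Continuous functions on `K` that are restrictions of combinations of ridge functions. -/
def ridgeSpanOn (σ : ℝ → ℝ) (K : Set (ι → ℝ)) :
    Submodule ℝ C(K, ℝ) :=
  ((span ℝ (Set.range (ridge σ))).map (LinearMap.funLeft ℝ ℝ ((↑) : K → ι → ℝ))).comap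
    (ContinuousMap.coeFnLinearMap ℝ)

theorem topologicalClosure_ridgeSpanOn_eq_top {σ : ℝ → ℝ}
    (hσ_cont : Continuous σ) (hσ : UniversalOnIntervals σ) {K : Set (ι → ℝ)}
    (hK : IsCompact K) : (ridgeSpanOn σ K).topologicalClosure = ⊤ := by
  classical
  have := isCompact_iff_compactSpace.mp hK
  let expK : (ι → ℝ) → C(K, ℝ) := fun a => ⟨fun x => Real.exp (a ⬝ᵥ x), by fun_prop⟩
  have hsep : (Algebra.adjoin ℝ (Set.range expK)).SeparatesPoints := by
    intro x y hxy
    obtain ⟨i, hi⟩ := Function.ne_iff.mp (Subtype.coe_ne_coe.mpr hxy)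
    refine ⟨_, ⟨expK (Pi.single i 1), Algebra.subset_adjoin ⟨_, rfl⟩, rfl⟩, ?_⟩
    simpa [expK, single_dotProduct] using hi
  have hmul : ∀ G ∈ Submonoid.closure (Set.range expK), G ∈ Set.range expK := fun G hG =>
    Submonoid.closure_induction (fun _ h => h) ⟨0, by ext; simp [expK]⟩
      (fun _ _ _ _ ⟨a, ha⟩ ⟨b, hb⟩ =>
        ⟨a + b, by ext; simp [expK, ← ha, ← hb, add_dotProduct, Real.exp_add]⟩) hG
  have hexp : ∀ a, expK a ∈ (ridgeSpanOn σ K).topologicalClosure := by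
    intro a
    rw [← SetLike.mem_coe, topologicalClosure_coe, Metric.mem_closure_iff]
    intro ε hε
    obtain ⟨F, hF_mem, hF⟩ := exists_mem_span_ridge_near_exp_dotProduct hσ hK a hε
    have hF_cont := continuous_of_mem_span
      (by rintro _ ⟨θ, rfl⟩; unfold ridge; fun_prop) hF_mem
    refine ⟨⟨K.domRestrict F, hF_cont.comp continuous_subtype_val⟩, ⟨F, hF_mem, rfl⟩, ?_⟩
    exact (ContinuousMap.dist_lt_iff hε).mpr fun x => hF x x.2
  have hle : Subalgebra.toSubmodule (Algebra.adjoin ℝ (Set.range expK)) ≤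
      (ridgeSpanOn σ K).topologicalClosure := by
    rw [Algebra.adjoin_eq_span, span_le]
    intro G hG
    obtain ⟨a, rfl⟩ := hmul G hG
    exact hexp a
  rw [eq_top_iff]
  intro G _
  refine closure_minimal hle (ridgeSpanOn σ K).isClosed_topologicalClosure ?_
  rw [Subalgebra.coe_toSubmodule, ← Subalgebra.topologicalClosure_coe,
    ContinuousMap.subalgebra_topologicalClosure_eq_top_of_separatesPoints _ hsep]
  trivial

theorem exists_mem_span_ridge_near {σ : ℝ → ℝ} (hσ_cont : Continuous σ)
    (hσ : UniversalOnIntervals σ) {K : Set (ι → ℝ)} (hK : IsCompact K) {h : (ι → ℝ) → ℝ}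
    (hh : ContinuousOn h K) {ε : ℝ} (hε : 0 < ε) :
    ∃ F ∈ span ℝ (Set.range (ridge σ)), ∀ x ∈ K, |h x - F x| < ε := by
  have := isCompact_iff_compactSpace.mp hK
  have hhK : (⟨K.domRestrict h, hh.domRestrict⟩ : C(K, ℝ)) ∈
      closure (ridgeSpanOn σ K : Set C(K, ℝ)) := by
    rw [← topologicalClosure_coe, topologicalClosure_ridgeSpanOn_eq_top hσ_cont hσ hK]
    trivial
  obtain ⟨G, ⟨F, hF_mem, hFG⟩, hG⟩ := Metric.mem_closure_iff.mp hhK ε hε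
  refine ⟨F, hF_mem, fun x hx => ?_⟩
  have hGx : G ⟨x, hx⟩ = F x := (congrFun hFG ⟨x, hx⟩).symm
  simpa [hGx, Real.dist_eq] using (ContinuousMap.dist_lt_iff hε).mp hG ⟨x, hx⟩

theorem exists_network_of_forall_mem_span {σ : ℝ → ℝ} {K : ℕ}
    {F : Fin K → (ι → ℝ) → ℝ} (hF : ∀ k, F k ∈ span ℝ (Set.range (ridge σ))) :
    ∃ (m : ℕ) (A : Matrix (Fin K) (Fin m) ℝ) (B : Matrix (Fin m) ι ℝ) (c : Fin m → ℝ),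
      ∀ x k, F k x = (A *ᵥ fun i => σ ((B *ᵥ x) i + c i)) k := by
  choose w hw using fun k => Finsupp.mem_span_range_iff_exists_finsupp.mp (hF k)
  classical
  set S := Finset.univ.biUnion fun k => (w k).support
  let e := S.equivFin
  refine ⟨S.card, Matrix.of fun k i => w k (e.symm i), Matrix.of fun i => (e.symm i).1.1,
    fun i => (e.symm i).1.2, fun x k => ?_⟩
  rw [← hw k, Finsupp.sum_of_support_subset _
    (Finset.subset_biUnion_of_mem (fun k => (w k).support) (Finset.mem_univ k)) _ (by simp),
    Finset.sum_apply, ← Finset.sum_coe_sort S, ← e.symm.sum_comp]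
  rfl

end

theorem exists_pos_forall_abs_dotProduct_sub_lt {n : Type*} [Fintype n] {s : Set (n → ℝ)}
    (hs : IsCompact s) {ε : ℝ} (hε : 0 < ε) :
    ∃ η > 0, ∀ u ∈ s, ∀ u' ∈ s, ∀ v v' : n → ℝ, ‖u - v‖ < η → ‖u' - v'‖ < η →
      |u ⬝ᵥ u' - v ⬝ᵥ v'| < ε := by
  set T := Metric.cthickening 1 s
  obtain ⟨δ, hδ, hδε⟩ := Metric.uniformContinuousOn_iff.mp
    ((hs.cthickening.prod hs.cthickening).uniformContinuousOn_of_continuous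
      (continuous_fst.dotProduct continuous_snd).continuousOn) ε hε
  have hT : ∀ u ∈ s, ∀ v, ‖u - v‖ < min δ 1 → u ∈ T ∧ v ∈ T := fun u hu v huv =>
    ⟨Metric.self_subset_cthickening _ hu, Metric.mem_cthickening_of_dist_le v u 1 s hu
      (by rw [dist_comm, dist_eq_norm]; exact huv.le.trans (min_le_right _ _))⟩
  refine ⟨min δ 1, by positivity, fun u hu u' hu' v v' hv hv' => ?_⟩
  obtain ⟨huT, hvT⟩ := hT u hu v hv
  obtain ⟨hu'T, hv'T⟩ := hT u' hu' v' hv'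
  refine (Real.dist_eq _ _).symm.trans_lt (hδε (u, u') ⟨huT, hu'T⟩ (v, v') ⟨hvT, hv'T⟩ ?_)
  rw [Prod.dist_eq, dist_eq_norm, dist_eq_norm]
  exact max_lt (hv.trans_le (min_le_left _ _)) (hv'.trans_le (min_le_left _ _))

theorem approximation_theorem_for_IPS_general
    (p Kstar : ℕ) (M : ℝ)
    (Y : Set (EuclideanSpace ℝ (Fin Kstar))) (hY : IsCompact Y)
    (fstar : (Fin p → ℝ) → EuclideanSpace ℝ (Fin Kstar))
    (hfstar_cont : ContinuousOn fstar {x : Fin p → ℝ | ∀ i, |x i| ≤ M})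
    (hfstar_maps : ∀ x ∈ {x : Fin p → ℝ | ∀ i, |x i| ≤ M}, fstar x ∈ Y)
    (g : EuclideanSpace ℝ (Fin Kstar) → EuclideanSpace ℝ (Fin Kstar) → ℝ)
    (hg_symm : ∀ y ∈ Y, ∀ y' ∈ Y, g y y' = g y' y)
    (hg_cont : ContinuousOn (fun yy : EuclideanSpace ℝ (Fin Kstar) × EuclideanSpace ℝ (Fin Kstar) =>
      g yy.1 yy.2) (Y ×ˢ Y))
    (hg_pd : ∀ (n : ℕ) (c : Fin n → ℝ) (y : Fin n → EuclideanSpace ℝ (Fin Kstar)),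
      (∀ i, y i ∈ Y) → 0 ≤ ∑ i, ∑ j, c i * c j * g (y i) (y j))
    (σ : ℝ → ℝ)
    (hσ : (σ = fun z => max 0 z) ∨
      ((∃ a b, σ a ≠ σ b) ∧ Continuous σ ∧ (∃ C, ∀ z, |σ z| ≤ C) ∧ Monotone σ)) :
    ∀ ε > (0 : ℝ), ∃ (K m : ℕ) (A : Matrix (Fin K) (Fin m) ℝ)
      (B : Matrix (Fin m) (Fin p) ℝ) (c : Fin m → ℝ),
      ∀ x ∈ {x : Fin p → ℝ | ∀ i, |x i| ≤ M}, ∀ x' ∈ {x : Fin p → ℝ | ∀ i, |x i| ≤ M},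
        |g (fstar x) (fstar x')
          - dotProduct
              (A.mulVec fun i => σ (B.mulVec x i + c i))
              (A.mulVec fun i => σ (B.mulVec x' i + c i))| < ε := by
  intro ε hε
  set X := {x : Fin p → ℝ | ∀ i, |x i| ≤ M}
  have hX : IsCompact X := by
    convert isCompact_Icc (a := fun _ : Fin p => -M) (b := fun _ => M)
    ext x
    simp [X, abs_le, Pi.le_def, forall_and]
  have hσ_cont : Continuous σ := by
    rcases hσ with rfl | ⟨-, h, -⟩
    exacts [continuous_const.max continuous_id, h]
  have hσ_univ : UniversalOnIntervals σ := by
    rcases hσ with rfl | ⟨hne, -, hbdd, hmono⟩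
    exacts [universalOnIntervals_relu, universalOnIntervals_of_monotone hmono hbdd hne]
  obtain ⟨n, φ, hφ⟩ := exists_features_near_kernel hY hg_symm hg_cont hg_pd (half_pos hε)
  set Φ : (Fin p → ℝ) → Fin n → ℝ := fun x k => φ k (fstar x)
  have hΦ : ContinuousOn Φ X :=
    continuousOn_pi.mpr fun k => (φ k).continuous.comp_continuousOn hfstar_cont
  obtain ⟨η, hη, hdot⟩ :=
    exists_pos_forall_abs_dotProduct_sub_lt (hX.image_of_continuousOn hΦ) (half_pos hε)
  choose F hF_mem hF using fun k =>
    exists_mem_span_ridge_near hσ_cont hσ_univ hX (continuousOn_pi.mp hΦ k) hη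
  obtain ⟨m, A, B, c, hnet⟩ := exists_network_of_forall_mem_span hF_mem
  refine ⟨n, m, A, B, c, fun x hx x' hx' => ?_⟩
  have hnear : ∀ x ∈ X, ‖Φ x - A *ᵥ fun i => σ ((B *ᵥ x) i + c i)‖ < η := fun x hx =>
    (pi_norm_lt_iff hη).mpr fun k => by simpa [← hnet] using hF k x hx
  calc _ ≤ |g (fstar x) (fstar x') - Φ x ⬝ᵥ Φ x'| + |Φ x ⬝ᵥ Φ x' - _| := abs_sub_le _ _ _
    _ < ε / 2 + ε / 2 := add_lt_add_of_le_of_lt (hφ _ (hfstar_maps x hx) _ (hfstar_maps x' hx'))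
        (hdot _ ⟨x, hx, rfl⟩ _ ⟨x', hx', rfl⟩ _ _ (hnear x hx) (hnear x' hx'))
    _ = ε := add_halves ε

/-- Approximation theorem for the inner-product similarity (IPS) model:
for a continuous `f* : [-M,M]ᵖ → Y` into a compact `Y ⊆ ℝ^{K*}` and a positive definite
kernel `g* : Y × Y → ℝ`, and an activation `σ` which is either ReLU or non-constant,
continuous, bounded and monotone increasing, for every `ε > 0` there is a one-hidden-layer
neural network `f_NN(x) = A σ(Bx + c)` such that
`|g*(f*(x), f*(x')) - ⟨f_NN(x), f_NN(x')⟩| < ε` on the cube. -/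
theorem approximation_theorem_for_IPS
    (p Kstar : ℕ) (M : ℝ) (hM : 0 < M)
    (Y : Set (EuclideanSpace ℝ (Fin Kstar))) (hY : IsCompact Y)
    (fstar : (Fin p → ℝ) → EuclideanSpace ℝ (Fin Kstar))
    (hfstar_cont : ContinuousOn fstar {x : Fin p → ℝ | ∀ i, |x i| ≤ M})
    (hfstar_maps : ∀ x ∈ {x : Fin p → ℝ | ∀ i, |x i| ≤ M}, fstar x ∈ Y)
    (g : EuclideanSpace ℝ (Fin Kstar) → EuclideanSpace ℝ (Fin Kstar) → ℝ)
    (hg_symm : ∀ y ∈ Y, ∀ y' ∈ Y, g y y' = g y' y)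
    (hg_cont : ContinuousOn (fun yy : EuclideanSpace ℝ (Fin Kstar) × EuclideanSpace ℝ (Fin Kstar) =>
      g yy.1 yy.2) (Y ×ˢ Y))
    (hg_pd : ∀ (n : ℕ) (c : Fin n → ℝ) (y : Fin n → EuclideanSpace ℝ (Fin Kstar)),
      (∀ i, y i ∈ Y) → 0 ≤ ∑ i, ∑ j, c i * c j * g (y i) (y j))
    (σ : ℝ → ℝ)
    (hσ : (σ = fun z => max 0 z) ∨
      ((∃ a b, σ a ≠ σ b) ∧ Continuous σ ∧ (∃ C, ∀ z, |σ z| ≤ C) ∧ Monotone σ)) :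
    ∀ ε > (0 : ℝ), ∃ (K m : ℕ) (A : Matrix (Fin K) (Fin m) ℝ)
      (B : Matrix (Fin m) (Fin p) ℝ) (c : Fin m → ℝ),
      ∀ x ∈ {x : Fin p → ℝ | ∀ i, |x i| ≤ M}, ∀ x' ∈ {x : Fin p → ℝ | ∀ i, |x i| ≤ M},
        |g (fstar x) (fstar x')
          - dotProduct
              (A.mulVec fun i => σ (B.mulVec x i + c i))
              (A.mulVec fun i => σ (B.mulVec x' i + c i))| < ε :=
  approximation_theorem_for_IPS_general p Kstar M Y hY fstar hfstar_cont hfstar_maps g hg_symm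
    hg_cont hg_pd σ hσ
end

section
/- (Approximation theorem for SIPS.) Let X = [-M,M]^p with M > 0, let Y ⊂ ℝ^{K*} be a compact set for some K* ∈ ℕ, let f* : X → Y be continuous, and let g* : Y × Y → ℝ be a conditionally positive definite kernel. Let σ : ℝ → ℝ be either the ReLU function or a non-constant, continuous, bounded, monotonically increasing function. Then for every ε > 0 there exist K, m_f, m_u ∈ ℕ and A ∈ ℝ^{K×m_f}, B ∈ ℝ^{m_f×p}, c ∈ ℝ^{m_f}, e ∈ ℝ^{m_u}, F ∈ ℝ^{m_u×p}, o ∈ ℝ^{m_u} such that, writing f_NN(x) = A σ(B x + c) and u_NN(x) = ⟨e, σ(F x + o)⟩ with σ applied elementwise, |g*(f*(x), f*(x')) − (⟨f_NN(x), f_NN(x')⟩ + u_NN(x) + u_NN(x'))| < ε for all (x, x') ∈ X × X. -/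
/-!
Put `y₀ = f*(0)`. Because `g*` is conditionally positive definite, the centred kernel
`k(y, y') = g*(y, y') - g*(y, y₀) - g*(y₀, y') + g*(y₀, y₀)` is positive semidefinite, and
`g*(f* x, f* x') = k(f* x, f* x') + u x + u x'` with `u x = g*(f* x, y₀) - g*(y₀, y₀) / 2`.
Averaging `k` against a partition of unity subordinate to a fine cover of the cube and factoring
the Gram matrix of `k` at the centres gives continuous features `F` with
`k(f* x, f* x') ≈ ⟨F x, F x'⟩`. It remains to approximate `F` and `u` uniformly by one-hidden-layer
networks. By Stone–Weierstrass, sums of exponential ridge functions `x ↦ exp (ℓ x)` are dense, so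
it suffices to approximate continuous functions of one variable; there, differences of steep
shifted copies of a squashing function (`σ` itself, or the ramp `σ t - σ (t - 1)` for ReLU) form
an approximate partition of unity subordinate to a grid.
-/

open Set Filter Topology Real Finset Matrix

section UniformClosureOn

variable {X : Type*}

def uniformClosureOn (V : Submodule ℝ (X → ℝ)) (S : Set X) : Submodule ℝ (X → ℝ) where
  carrier := {f | ∀ ε > 0, ∃ q ∈ V, ∀ x ∈ S, |f x - q x| ≤ ε}
  zero_mem' ε hε := ⟨0, V.zero_mem, fun x _ => by simpa using hε.le⟩
  add_mem' {f g} hf hg ε hε := by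
    obtain ⟨q, hqV, hq⟩ := hf (ε / 2) (half_pos hε)
    obtain ⟨r, hrV, hr⟩ := hg (ε / 2) (half_pos hε)
    refine ⟨q + r, V.add_mem hqV hrV, fun x hx => ?_⟩
    calc |(f + g) x - (q + r) x| = |(f x - q x) + (g x - r x)| := by
          simp only [Pi.add_apply]; ring_nf
      _ ≤ |f x - q x| + |g x - r x| := abs_add_le _ _
      _ ≤ ε := by linarith [hq x hx, hr x hx]
  smul_mem' a f hf ε hε := by
    obtain ⟨q, hqV, hq⟩ := hf (ε / (|a| + 1)) (by positivity)
    refine ⟨a • q, V.smul_mem a hqV, fun x hx => ?_⟩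
    calc |(a • f) x - (a • q) x| = |a| * |f x - q x| := by
          simp only [Pi.smul_apply, smul_eq_mul, ← mul_sub, abs_mul]
      _ ≤ (|a| + 1) * (ε / (|a| + 1)) := by
          gcongr
          · linarith
          · exact hq x hx
      _ = ε := by field_simp

variable {V W : Submodule ℝ (X → ℝ)} {S : Set X}

theorem le_uniformClosureOn : V ≤ uniformClosureOn V S :=
  fun f hf _ hε => ⟨f, hf, fun x _ => by simpa using hε.le⟩

theorem uniformClosureOn_le_of_le (h : V ≤ uniformClosureOn W S) :
    uniformClosureOn V S ≤ uniformClosureOn W S := by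
  intro f hf ε hε
  obtain ⟨q, hqV, hq⟩ := hf (ε / 2) (half_pos hε)
  obtain ⟨r, hrW, hr⟩ := h hqV (ε / 2) (half_pos hε)
  refine ⟨r, hrW, fun x hx => ?_⟩
  calc |f x - r x| ≤ |f x - q x| + |q x - r x| := abs_sub_le _ _ _
    _ ≤ ε := by linarith [hq x hx, hr x hx]

theorem uniformClosureOn_mono (h : V ≤ W) : uniformClosureOn V S ≤ uniformClosureOn W S :=
  uniformClosureOn_le_of_le (h.trans le_uniformClosureOn)

end UniformClosureOn

theorem abs_sub_sum_mul_le {ι : Type*} (s : Finset ι) {w b : ι → ℝ} {a ε η : ℝ}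
    (hw : ∀ j ∈ s, 0 ≤ w j) (h : ∀ j ∈ s, w j * |a - b j| ≤ w j * ε + η) :
    |a - ∑ j ∈ s, w j * b j| ≤ |a| * |1 - ∑ j ∈ s, w j| + (∑ j ∈ s, w j) * ε + #s * η := by
  have hsplit : a - ∑ j ∈ s, w j * b j = a * (1 - ∑ j ∈ s, w j) + ∑ j ∈ s, w j * (a - b j) := by
    simp only [mul_sub, sum_sub_distrib, ← sum_mul]
    ring
  calc |a - ∑ j ∈ s, w j * b j|
      ≤ |a * (1 - ∑ j ∈ s, w j)| + |∑ j ∈ s, w j * (a - b j)| := hsplit ▸ abs_add_le _ _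
    _ ≤ |a| * |1 - ∑ j ∈ s, w j| + ∑ j ∈ s, (w j * ε + η) := by
        rw [abs_mul]
        gcongr
        refine (abs_sum_le_sum_abs _ _).trans (sum_le_sum fun j hj => ?_)
        rw [abs_mul, abs_of_nonneg (hw j hj)]
        exact h j hj
    _ = |a| * |1 - ∑ j ∈ s, w j| + (∑ j ∈ s, w j) * ε + #s * η := by
        rw [sum_add_distrib, sum_const, nsmul_eq_mul, sum_mul, add_assoc]

section NeuralSpan

variable {X Y : Type*} [TopologicalSpace X] [AddCommGroup X] [Module ℝ X]
  [TopologicalSpace Y] [AddCommGroup Y] [Module ℝ Y] {σ : ℝ → ℝ}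

/-- The functions computed by one-hidden-layer networks with activation `σ` and scalar output. -/
def neuralSpan (σ : ℝ → ℝ) (X : Type*) [TopologicalSpace X] [AddCommGroup X] [Module ℝ X] :
    Submodule ℝ (X → ℝ) :=
  Submodule.span ℝ (range fun w : StrongDual ℝ X × ℝ => fun x => σ (w.1 x + w.2))

theorem ridge_mem_neuralSpan (ℓ : StrongDual ℝ X) (b : ℝ) :
    (fun x => σ (ℓ x + b)) ∈ neuralSpan σ X :=
  Submodule.subset_span ⟨(ℓ, b), rfl⟩

theorem affine_mem_neuralSpan (a b : ℝ) : (fun t => σ (a * t + b)) ∈ neuralSpan σ ℝ := by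
  simpa using ridge_mem_neuralSpan (σ := σ) (a • ContinuousLinearMap.id ℝ ℝ) b

theorem comp_mem_neuralSpan (T : X →L[ℝ] Y) {q : Y → ℝ} (hq : q ∈ neuralSpan σ Y) :
    q ∘ T ∈ neuralSpan σ X := by
  suffices neuralSpan σ Y ≤ (neuralSpan σ X).comap (LinearMap.funLeft ℝ ℝ T) from this hq
  refine Submodule.span_le.mpr ?_
  rintro _ ⟨⟨ℓ, b⟩, rfl⟩
  exact ridge_mem_neuralSpan (ℓ.comp T) b

end NeuralSpan

section SigmoidBump

variable {s : ℝ → ℝ} {L η : ℝ}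

/-- For a squashing function `s` and large `L`, an approximate indicator of `[-1/2, 1/2]`. -/
noncomputable def sigmoidBump (s : ℝ → ℝ) (L x : ℝ) : ℝ :=
  s (L * (x + 1 / 2)) - s (L * (x - 1 / 2))

theorem sigmoidBump_nonneg (hs : Monotone s) (hL : 0 ≤ L) (x : ℝ) : 0 ≤ sigmoidBump s L x :=
  sub_nonneg.mpr (hs (by nlinarith))

theorem sum_sigmoidBump (s : ℝ → ℝ) (L r : ℝ) (n : ℕ) :
    ∑ j ∈ range (n + 1), sigmoidBump s L (r - j) =
      s (L * (r + 1 / 2)) - s (L * (r - n - 1 / 2)) := by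
  convert sum_range_sub' (fun j : ℕ => s (L * (r - j + 1 / 2))) (n + 1) using 1
  · refine sum_congr rfl fun j _ => ?_
    simp only [sigmoidBump, Nat.cast_add, Nat.cast_one]
    ring_nf
  · simp only [Nat.cast_zero, Nat.cast_add, Nat.cast_one]
    ring_nf

theorem exists_sigmoid_steepness (hs₀ : Tendsto s atBot (𝓝 0)) (hs₁ : Tendsto s atTop (𝓝 1))
    (hη : 0 < η) : ∃ L, 0 ≤ L ∧ s (-(L / 2)) ≤ η ∧ 1 - η ≤ s (L / 2) := by
  have hhalf : Tendsto (fun L : ℝ => L / 2) atTop atTop := tendsto_id.atTop_div_const two_pos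
  exact ((eventually_ge_atTop 0).and
    (((hs₀.comp (tendsto_neg_atTop_atBot.comp hhalf)).eventually (eventually_le_nhds hη)).and
      ((hs₁.comp hhalf).eventually (eventually_ge_nhds (by linarith))))).exists

theorem sigmoidBump_le (hs : Monotone s) (hs₀ : Tendsto s atBot (𝓝 0))
    (hs₁ : Tendsto s atTop (𝓝 1)) (hL : 0 ≤ L) (hlo : s (-(L / 2)) ≤ η)
    (hhi : 1 - η ≤ s (L / 2)) {x : ℝ} (hx : 1 ≤ |x|) : sigmoidBump s L x ≤ η := by
  rw [sigmoidBump]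
  rcases le_abs'.mp hx with hx | hx
  · linarith [hs (show L * (x + 1 / 2) ≤ -(L / 2) by nlinarith),
      hs.le_of_tendsto hs₀ (L * (x - 1 / 2))]
  · linarith [hs (show L / 2 ≤ L * (x - 1 / 2) by nlinarith),
      hs.ge_of_tendsto hs₁ (L * (x + 1 / 2))]

theorem abs_sub_sum_sigmoidBump_mul_le (hs : Monotone s) (hs₀ : Tendsto s atBot (𝓝 0))
    (hs₁ : Tendsto s atTop (𝓝 1)) (hL : 0 ≤ L) (hlo : s (-(L / 2)) ≤ η)
    (hhi : 1 - η ≤ s (L / 2)) {n : ℕ} {r : ℝ} (hr₀ : 0 ≤ r) (hrn : r ≤ n) {a C ε : ℝ}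
    {y : ℕ → ℝ} (hε : 0 ≤ ε) (ha : |a| ≤ C) (hy : ∀ j ≤ n, |y j| ≤ C)
    (hnear : ∀ j ≤ n, |r - j| < 1 → |a - y j| ≤ ε) :
    |a - ∑ j ∈ range (n + 1), sigmoidBump s L (r - j) * y j| ≤ ε + 2 * C * η * (n + 2) := by
  have hη : 0 ≤ η := (hs.le_of_tendsto hs₀ _).trans hlo
  have hC : 0 ≤ C := (abs_nonneg a).trans ha
  have htop : 1 - η ≤ s (L * (r + 1 / 2)) := hhi.trans (hs (by nlinarith))
  have hbot : s (L * (r - n - 1 / 2)) ≤ η := (hs (by nlinarith)).trans hlo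
  have h1 := hs.ge_of_tendsto hs₁ (L * (r + 1 / 2))
  have h0 := hs.le_of_tendsto hs₀ (L * (r - n - 1 / 2))
  refine (abs_sub_sum_mul_le _ (fun j _ => sigmoidBump_nonneg hs hL _) (ε := ε)
    (η := 2 * C * η) (fun j hj => ?_)).trans ?_
  · have hj := Nat.lt_succ_iff.mp (mem_range.mp hj)
    have hw := sigmoidBump_nonneg hs hL (r - j)
    by_cases hrj : |r - j| < 1
    · nlinarith [hnear j hj hrj]
    · have hfar := sigmoidBump_le hs hs₀ hs₁ hL hlo hhi (not_lt.mp hrj)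
      have : |a - y j| ≤ 2 * C := (abs_sub _ _).trans (by linarith [hy j hj])
      nlinarith [abs_nonneg (a - y j)]
  · rw [card_range, sum_sigmoidBump]
    have : |1 - (s (L * (r + 1 / 2)) - s (L * (r - n - 1 / 2)))| ≤ 2 * η := by
      rw [abs_le]; constructor <;> linarith
    push_cast
    nlinarith [abs_nonneg a]

theorem mem_uniformClosureOn_Icc_of_sigmoidBump_mem {V : Submodule ℝ (ℝ → ℝ)}
    (hs : Monotone s) (hs₀ : Tendsto s atBot (𝓝 0)) (hs₁ : Tendsto s atTop (𝓝 1))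
    (hV : ∀ L a b, (fun t => sigmoidBump s L (a * t + b)) ∈ V) {φ : ℝ → ℝ} (hφ : Continuous φ)
    (u v : ℝ) : φ ∈ uniformClosureOn V (Icc u v) := by
  intro ε hε
  have hK : IsCompact (Icc u (v + 1)) := isCompact_Icc
  obtain ⟨δ, hδ, hφδ⟩ := Metric.uniformContinuousOn_iff.mp
    (hK.uniformContinuousOn_of_continuous hφ.continuousOn) (ε / 2) (half_pos hε)
  obtain ⟨C, hC⟩ := hK.exists_bound_of_continuousOn hφ.continuousOn
  set h := min δ 1
  have hh : 0 < h := lt_min hδ one_pos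
  set n := ⌈(v - u) / h⌉₊
  obtain ⟨η, hη, hηC⟩ := exists_pos_mul_lt (half_pos hε) (2 * C * (n + 2))
  obtain ⟨L, hL, hlo, hhi⟩ := exists_sigmoid_steepness hs₀ hs₁ hη
  refine ⟨∑ j ∈ range (n + 1), φ (u + j * h) •
      fun t => sigmoidBump s L (h⁻¹ * t + (-(u / h) - j)), ?_, fun t ht => ?_⟩
  · exact sum_mem fun j _ => Submodule.smul_mem _ _ (hV _ _ _)
  have hnh : n * h ≤ v - u + h := by
    rw [← le_div_iff₀ hh, add_div, div_self hh.ne']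
    exact (Nat.ceil_lt_add_one (div_nonneg (by linarith [ht.1, ht.2]) hh.le)).le
  have hgrid : ∀ j ≤ n, u + j * h ∈ Icc u (v + 1) := fun j hj =>
    ⟨by nlinarith, by nlinarith [min_le_right δ 1, (Nat.cast_le (α := ℝ)).mpr hj]⟩
  have ht' : t ∈ Icc u (v + 1) := ⟨ht.1, by linarith [ht.2]⟩
  have hnear : ∀ j ≤ n, |(t - u) / h - j| < 1 → |φ t - φ (u + j * h)| ≤ ε / 2 := by
    intro j hj hrj
    refine (Real.dist_eq _ _ ▸ hφδ t ht' _ (hgrid j hj) ?_).le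
    rw [Real.dist_eq, show t - (u + j * h) = h * ((t - u) / h - j) by field_simp; ring,
      abs_mul, abs_of_pos hh]
    nlinarith [min_le_left δ 1]
  have key := abs_sub_sum_sigmoidBump_mul_le hs hs₀ hs₁ hL hlo hhi
    (div_nonneg (by linarith [ht.1]) hh.le)
    ((div_le_div_of_nonneg_right (by linarith [ht.2]) hh.le).trans (Nat.le_ceil _))
    (half_pos hε).le (by simpa using hC t ht') (fun j hj => by simpa using hC _ (hgrid j hj))
    hnear
  have hq : (∑ j ∈ range (n + 1), φ (u + j * h) •
      fun t => sigmoidBump s L (h⁻¹ * t + (-(u / h) - j))) t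
      = ∑ j ∈ range (n + 1), sigmoidBump s L ((t - u) / h - j) * φ (u + j * h) := by
    simp only [Finset.sum_apply, Pi.smul_apply, smul_eq_mul]
    exact sum_congr rfl fun j _ => by rw [mul_comm]; ring_nf
  rw [hq]
  linarith

end SigmoidBump

theorem mem_uniformClosureOn_neuralSpan_Icc {σ : ℝ → ℝ} (hmono : Monotone σ) {l₀ l₁ : ℝ}
    (hl : l₀ < l₁) (h₀ : Tendsto σ atBot (𝓝 l₀)) (h₁ : Tendsto σ atTop (𝓝 l₁))
    {φ : ℝ → ℝ} (hφ : Continuous φ) (u v : ℝ) :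
    φ ∈ uniformClosureOn (neuralSpan σ ℝ) (Icc u v) := by
  have hd : 0 < l₁ - l₀ := sub_pos.mpr hl
  refine mem_uniformClosureOn_Icc_of_sigmoidBump_mem (s := fun y => (σ y - l₀) / (l₁ - l₀))
    (fun y y' h => div_le_div_of_nonneg_right (by linarith [hmono h]) hd.le)
    (by simpa using (h₀.sub_const l₀).div_const (l₁ - l₀))
    (by simpa [div_self hd.ne'] using (h₁.sub_const l₀).div_const (l₁ - l₀))
    (fun L a b => ?_) hφ u v
  convert (neuralSpan σ ℝ).smul_mem (l₁ - l₀)⁻¹ ((neuralSpan σ ℝ).sub_mem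
    (affine_mem_neuralSpan (L * a) (L * (b + 1 / 2)))
    (affine_mem_neuralSpan (L * a) (L * (b - 1 / 2)))) using 1
  ext t
  simp only [sigmoidBump, Pi.smul_apply, Pi.sub_apply, smul_eq_mul]
  ring_nf

section Universal

variable {X : Type*} [TopologicalSpace X] [AddCommGroup X] [Module ℝ X] {σ : ℝ → ℝ}
  {S : Set X}

noncomputable def expDualHom (S : Set X) : Multiplicative (StrongDual ℝ X) →* C(S, ℝ) where
  toFun ℓ := ⟨fun x => exp (ℓ.toAdd x), by fun_prop⟩
  map_one' := by ext; simp
  map_mul' ℓ ℓ' := by ext; simp [exp_add]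

theorem mem_uniformClosureOn_span_exp [SeparatingDual ℝ X] (hS : IsCompact S) {f : X → ℝ}
    (hf : ContinuousOn f S) :
    f ∈ uniformClosureOn
      (Submodule.span ℝ (range fun ℓ : StrongDual ℝ X => fun x => exp (ℓ x))) S := by
  have : CompactSpace S := isCompact_iff_compactSpace.mp hS
  -- the span of a multiplicative monoid is a subalgebra, so `adjoin` adds nothing
  let A := Algebra.adjoin ℝ (MonoidHom.mrange (expDualHom S) : Set C(S, ℝ))
  have hsep : A.SeparatesPoints := by
    intro x y hxy
    obtain ⟨ℓ, hℓ⟩ :=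
      SeparatingDual.exists_separating_of_ne (R := ℝ) (Subtype.coe_injective.ne hxy)
    exact ⟨_, ⟨expDualHom S (.ofAdd ℓ), Algebra.subset_adjoin ⟨_, rfl⟩, rfl⟩,
      by simpa [expDualHom] using hℓ⟩
  intro ε hε
  obtain ⟨g, hg⟩ := ContinuousMap.exists_mem_subalgebra_near_continuous_of_separatesPoints A
    hsep (S.domRestrict f) hf.domRestrict ε hε
  have hgspan :
      (g : C(S, ℝ)) ∈ Submodule.span ℝ (MonoidHom.mrange (expDualHom S) : Set C(S, ℝ)) := by
    simpa [A, ← Subalgebra.mem_toSubmodule, Algebra.adjoin_eq_span] using g.2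
  have : ⇑(g : C(S, ℝ)) ∈
      (Submodule.span ℝ (range fun ℓ : StrongDual ℝ X => fun x => exp (ℓ x))).map
        (LinearMap.funLeft ℝ ℝ ((↑) : S → X)) := by
    convert Submodule.mem_map_of_mem (f := ContinuousMap.coeFnLinearMap ℝ) hgspan using 1
    · rw [Submodule.map_span, Submodule.map_span]
      congr 1
      ext F
      simp [expDualHom, LinearMap.funLeft, Function.comp_def]
      rfl
    · rfl
  obtain ⟨h, hh, hhg⟩ := this
  refine ⟨h, hh, fun x hx => ?_⟩
  have := hg ⟨x, hx⟩
  rw [← congrFun hhg ⟨x, hx⟩] at this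
  simpa [abs_sub_comm, LinearMap.funLeft, Set.domRestrict] using this.le

theorem comp_mem_uniformClosureOn_neuralSpan {φ : ℝ → ℝ}
    (hφ : ∀ R, φ ∈ uniformClosureOn (neuralSpan σ ℝ) (Icc (-R) R)) (ℓ : StrongDual ℝ X)
    (hS : IsCompact S) : φ ∘ ℓ ∈ uniformClosureOn (neuralSpan σ X) S := by
  obtain ⟨R, hR⟩ := hS.exists_bound_of_continuousOn ℓ.continuous.continuousOn
  intro ε hε
  obtain ⟨q, hq, hqφ⟩ := hφ R ε hε
  exact ⟨q ∘ ℓ, comp_mem_neuralSpan ℓ hq, fun x hx => hqφ _ (abs_le.mp (hR x hx))⟩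

theorem mem_uniformClosureOn_neuralSpan [SeparatingDual ℝ X] (hmono : Monotone σ) {l₀ l₁ : ℝ}
    (hl : l₀ < l₁) (h₀ : Tendsto σ atBot (𝓝 l₀)) (h₁ : Tendsto σ atTop (𝓝 l₁))
    (hS : IsCompact S) {f : X → ℝ} (hf : ContinuousOn f S) :
    f ∈ uniformClosureOn (neuralSpan σ X) S := by
  refine uniformClosureOn_le_of_le (Submodule.span_le.mpr ?_) (mem_uniformClosureOn_span_exp hS hf)
  rintro _ ⟨ℓ, rfl⟩
  exact comp_mem_uniformClosureOn_neuralSpan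
    (fun R => mem_uniformClosureOn_neuralSpan_Icc hmono hl h₀ h₁ continuous_exp _ _) ℓ hS

theorem relu_sub_relu_eq (t : ℝ) : max 0 t - max 0 (t - 1) = max 0 (min 1 t) := by
  simp only [max_def, min_def]
  split_ifs <;> linarith

theorem neuralSpan_ramp_le_neuralSpan_relu :
    neuralSpan (fun t => max 0 t - max 0 (t - 1)) X ≤ neuralSpan (fun t => max 0 t) X := by
  refine Submodule.span_le.mpr ?_
  rintro _ ⟨⟨ℓ, b⟩, rfl⟩
  rw [SetLike.mem_coe]
  convert (neuralSpan _ X).sub_mem (ridge_mem_neuralSpan (σ := fun t => max 0 t) ℓ b)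
    (ridge_mem_neuralSpan ℓ (b - 1)) using 1
  ext x
  simp only [Pi.sub_apply]
  ring_nf

theorem mem_uniformClosureOn_neuralSpan_of_activation [SeparatingDual ℝ X]
    (hσ : (σ = fun z => max 0 z) ∨
      ((∃ a b, σ a ≠ σ b) ∧ Continuous σ ∧ (∃ C, ∀ z, |σ z| ≤ C) ∧ Monotone σ))
    (hS : IsCompact S) {f : X → ℝ} (hf : ContinuousOn f S) :
    f ∈ uniformClosureOn (neuralSpan σ X) S := by
  rcases hσ with rfl | ⟨⟨a, b, hab⟩, -, ⟨C, hC⟩, hmono⟩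
  · refine uniformClosureOn_mono neuralSpan_ramp_le_neuralSpan_relu
      (mem_uniformClosureOn_neuralSpan (l₀ := 0) (l₁ := 1) ?_ one_pos ?_ ?_ hS hf) <;>
      simp only [relu_sub_relu_eq]
    · exact monotone_const.max (monotone_const.min monotone_id)
    · exact tendsto_const_nhds.congr' ((eventually_le_atBot 0).mono fun t ht => by
        simp [min_eq_right (ht.trans zero_le_one), ht])
    · exact tendsto_const_nhds.congr' ((eventually_ge_atTop 1).mono fun t ht => by simp [ht])
  · have hA : BddAbove (range σ) := ⟨C, by rintro _ ⟨z, rfl⟩; exact (abs_le.mp (hC z)).2⟩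
    have hB : BddBelow (range σ) := ⟨-C, by rintro _ ⟨z, rfl⟩; exact (abs_le.mp (hC z)).1⟩
    refine mem_uniformClosureOn_neuralSpan hmono (lt_of_not_ge fun h => hab ?_)
      (tendsto_atBot_ciInf hmono hB) (tendsto_atTop_ciSup hmono hA) hS hf
    exact le_antisymm ((le_ciSup hA a).trans (h.trans (ciInf_le hB b)))
      ((le_ciSup hA b).trans (h.trans (ciInf_le hB a)))

end Universal

section Kernel

variable {E : Type*}

def IsPosSemidefKernelOn (k : E → E → ℝ) (S : Set E) : Prop :=
  ∀ (n : ℕ) (x : Fin n → E), (∀ i, x i ∈ S) → (Matrix.of fun i j => k (x i) (x j)).PosSemidef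

/-- The paper's "conditionally positive definite". -/
def IsCondPosSemidefKernelOn (g : E → E → ℝ) (S : Set E) : Prop :=
  ∀ (n : ℕ) (c : Fin n → ℝ) (y : Fin n → E),
    ∑ i, c i = 0 → (∀ i, y i ∈ S) → 0 ≤ ∑ i, ∑ j, c i * c j * g (y i) (y j)

def centeredKernel (g : E → E → ℝ) (y₀ y y' : E) : ℝ := g y y' - g y y₀ - g y₀ y' + g y₀ y₀

theorem IsCondPosSemidefKernelOn.isPosSemidefKernelOn_centeredKernel {g : E → E → ℝ}
    {S : Set E} (hg : IsCondPosSemidefKernelOn g S) (hsymm : ∀ y ∈ S, ∀ y' ∈ S, g y y' = g y' y)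
    {y₀ : E} (hy₀ : y₀ ∈ S) : IsPosSemidefKernelOn (centeredKernel g y₀) S := by
  intro n y hy
  rw [Matrix.posSemidef_iff_dotProduct_mulVec]
  refine ⟨Matrix.IsHermitian.ext fun i j => ?_, fun c => ?_⟩
  · simp only [Matrix.of_apply, star_trivial, centeredKernel, hsymm _ (hy i) _ (hy j),
      hsymm _ (hy i) _ hy₀, hsymm _ (hy j) _ hy₀]
    ring
  -- the weights `c` on `y`, completed by `-∑ c` on `y₀`, sum to zero
  have hcpd := hg (n + 1) (Fin.cons (-∑ i, c i) c) (Fin.cons y₀ y)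
    (by simp [Fin.sum_univ_succ]) (Fin.cases hy₀ hy)
  have hquad : star c ⬝ᵥ ((Matrix.of fun i j => centeredKernel g y₀ (y i) (y j)) *ᵥ c)
      = ∑ i, ∑ j, c i * c j * g (y i) (y j) - (∑ i, c i * g (y i) y₀) * ∑ j, c j
        - (∑ i, c i) * ∑ j, c j * g y₀ (y j) + (∑ i, c i) * (∑ j, c j) * g y₀ y₀ := by
    rw [sum_mul_sum, sum_mul_sum, sum_mul_sum, sum_mul]
    simp only [dotProduct, Matrix.mulVec, star_trivial, Matrix.of_apply, mul_sum, sum_mul,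
      ← sum_sub_distrib, ← sum_add_distrib]
    exact sum_congr rfl fun i _ => sum_congr rfl fun j _ => by rw [centeredKernel]; ring
  simp only [Fin.sum_univ_succ, Fin.cons_zero, Fin.cons_succ, sum_add_distrib] at hcpd
  rw [hquad]
  simp only [neg_mul, mul_neg, sum_neg_distrib, mul_assoc, mul_left_comm _ (∑ i, c i),
    ← mul_sum] at hcpd ⊢
  linarith

theorem IsPosSemidefKernelOn.comp {F : Type*} {k : E → E → ℝ} {S : Set E}
    (hk : IsPosSemidefKernelOn k S) {f : F → E} {T : Set F} (hf : MapsTo f T S) :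
    IsPosSemidefKernelOn (fun x x' => k (f x) (f x')) T :=
  fun n x hx => hk n (f ∘ x) fun i => hf (hx i)

theorem exists_partitionOfUnity_ball {X : Type*} [MetricSpace X] {S : Set X} (hS : IsCompact S)
    {δ : ℝ} (hδ : 0 < δ) :
    ∃ (n : ℕ) (c : Fin n → X) (ρ : PartitionOfUnity (Fin n) X S),
      (∀ v, c v ∈ S) ∧ ∀ v x, ρ v x ≠ 0 → dist x (c v) < δ := by
  obtain ⟨t, htS, htfin, hcover⟩ := hS.finite_cover_balls hδ
  obtain ⟨n, c, rfl⟩ := htfin.fin_embedding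
  obtain ⟨ρ, hρ⟩ := PartitionOfUnity.exists_isSubordinate hS.isClosed
    (fun v => Metric.ball (c v) δ) (fun _ => Metric.isOpen_ball) (by simpa using hcover)
  exact ⟨n, c, ρ, fun v => htS (mem_range_self v), fun v x hx => hρ v (subset_tsupport _ hx)⟩

theorem IsPosSemidefKernelOn.exists_continuous_feature_near {X : Type*} [MetricSpace X]
    {k : X → X → ℝ} {S : Set X} (hk : IsPosSemidefKernelOn k S) (hS : IsCompact S)
    (hkc : ContinuousOn (fun z : X × X => k z.1 z.2) (S ×ˢ S)) {ε : ℝ} (hε : 0 < ε) :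
    ∃ (K : ℕ) (F : X → Fin K → ℝ), Continuous F ∧
      ∀ x ∈ S, ∀ x' ∈ S, |k x x' - F x ⬝ᵥ F x'| ≤ ε := by
  obtain ⟨δ, hδ, hkδ⟩ := Metric.uniformContinuousOn_iff.mp
    ((hS.prod hS).uniformContinuousOn_of_continuous hkc) ε hε
  obtain ⟨n, c, ρ, hcS, hρ⟩ := exists_partitionOfUnity_ball hS hδ
  obtain ⟨m, a, ha⟩ := posSemidef_iff_eq_sum_vecMulVec.mp (hk n c hcS)
  refine ⟨m, fun x i => a i ⬝ᵥ fun v => ρ v x, by fun_prop, fun x hx x' hx' => ?_⟩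
  have hgram : (a · ⬝ᵥ fun v => ρ v x) ⬝ᵥ (a · ⬝ᵥ fun v => ρ v x')
      = ∑ p : Fin n × Fin n, ρ p.1 x * ρ p.2 x' * k (c p.1) (c p.2) := by
    have hkc : ∀ v w, k (c v) (c w) = ∑ i, a i v * a i w := fun v w => by
      simpa [Matrix.sum_apply, vecMulVec_apply] using congrFun₂ ha v w
    simp only [dotProduct, sum_mul_sum]
    simp only [hkc, Fintype.sum_prod_type, mul_sum]
    rw [sum_comm]
    refine sum_congr rfl fun v _ => ?_
    rw [sum_comm]
    exact sum_congr rfl fun w _ => sum_congr rfl fun i _ => by ring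
  have hsum : ∀ x ∈ S, ∑ v, ρ v x = 1 := fun x hx => by
    simpa [finsum_eq_sum_of_fintype] using ρ.sum_eq_one hx
  rw [hgram]
  refine (abs_sub_sum_mul_le _ (fun p _ => mul_nonneg (ρ.nonneg _ _) (ρ.nonneg _ _)) (η := 0)
    (ε := ε) (fun p _ => ?_)).trans ?_
  · by_cases hp : ρ p.1 x * ρ p.2 x' = 0
    · simp [hp]
    have hd : dist (x, x') (c p.1, c p.2) < δ := by
      rw [Prod.dist_eq]
      exact max_lt (hρ _ _ (left_ne_zero_of_mul hp)) (hρ _ _ (right_ne_zero_of_mul hp))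
    have := hkδ (x, x') ⟨hx, hx'⟩ _ ⟨hcS _, hcS _⟩ hd
    rw [Real.dist_eq] at this
    nlinarith [mul_nonneg (ρ.nonneg p.1 x) (ρ.nonneg p.2 x')]
  · simp [Fintype.sum_prod_type, ← sum_mul_sum, hsum x hx, hsum x' hx']

end Kernel

section ShallowNet

theorem exists_fin_sum_eq_of_forall_mem_span_range {R M α ι : Type*} [Semiring R]
    [AddCommMonoid M] [Module R M] [Fintype ι] {v : α → M} {f : ι → M}
    (hf : ∀ i, f i ∈ Submodule.span R (range v)) :
    ∃ (m : ℕ) (e : Fin m → α) (A : ι → Fin m → R), ∀ i, f i = ∑ j, A i j • v (e j) := by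
  classical
  choose c hc using fun i => Finsupp.mem_span_range_iff_exists_finsupp.mp (hf i)
  set s := univ.biUnion fun i => (c i).support
  refine ⟨#s, fun j => s.equivFin.symm j, fun i j => c i (s.equivFin.symm j), fun i => ?_⟩
  rw [← hc i, Finsupp.sum_of_support_subset _
    (subset_biUnion_of_mem (fun i => (c i).support) (Finset.mem_univ i)) _ (by simp),
    ← sum_coe_sort s]
  exact (Equiv.sum_comp s.equivFin.symm _).symm

def shallowNet {κ ι ν : Type*} [Fintype ι] [Fintype ν] (σ : ℝ → ℝ) (A : Matrix κ ι ℝ)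
    (B : Matrix ι ν ℝ) (c : ι → ℝ) (x : ν → ℝ) : κ → ℝ :=
  A *ᵥ fun i => σ ((B *ᵥ x) i + c i)

variable {p : ℕ} {σ : ℝ → ℝ} {S : Set (Fin p → ℝ)}

theorem exists_shallowNet_near {K : ℕ}
    (hσ : ∀ f, ContinuousOn f S → f ∈ uniformClosureOn (neuralSpan σ (Fin p → ℝ)) S)
    {F : (Fin p → ℝ) → Fin K → ℝ} (hF : ContinuousOn F S) {δ : ℝ} (hδ : 0 < δ) :
    ∃ (m : ℕ) (A : Matrix (Fin K) (Fin m) ℝ) (B : Matrix (Fin m) (Fin p) ℝ) (c : Fin m → ℝ),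
      ∀ x ∈ S, ∀ l, |F x l - shallowNet σ A B c x l| ≤ δ := by
  choose q hq hqF using fun l =>
    hσ (fun x => F x l) ((continuous_apply l).comp_continuousOn hF) δ hδ
  obtain ⟨m, e, A, hA⟩ := exists_fin_sum_eq_of_forall_mem_span_range hq
  refine ⟨m, Matrix.of A,
    LinearMap.toMatrix' (LinearMap.pi fun i => ((e i).1 : (Fin p → ℝ) →ₗ[ℝ] ℝ)),
    fun i => (e i).2, fun x hx l => ?_⟩
  convert hqF l x hx using 2
  simp only [shallowNet, LinearMap.toMatrix'_mulVec, LinearMap.pi_apply,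
    ContinuousLinearMap.coe_coe, hA l]
  simp [mulVec, dotProduct]

theorem abs_dotProduct_sub_dotProduct_le {ι : Type*} [Fintype ι] {u v u' v' : ι → ℝ} {C δ : ℝ}
    (hu : ∀ i, |u i| ≤ C) (hv : ∀ i, |v i| ≤ C) (huu' : ∀ i, |u i - u' i| ≤ δ)
    (hvv' : ∀ i, |v i - v' i| ≤ δ) :
    |u ⬝ᵥ v - u' ⬝ᵥ v'| ≤ Fintype.card ι * ((2 * C + δ) * δ) := by
  rw [dotProduct, dotProduct, ← sum_sub_distrib, ← nsmul_eq_mul, ← card_univ]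
  refine (abs_sum_le_sum_abs _ _).trans (sum_le_card_nsmul _ _ _ fun i _ => ?_)
  have hδ : 0 ≤ δ := (abs_nonneg _).trans (huu' i)
  have hv' : |v' i| ≤ C + δ := by
    linarith [abs_sub_abs_le_abs_sub (v' i) (v i), abs_sub_comm (v i) (v' i), hv i, hvv' i]
  calc |u i * v i - u' i * v' i| = |u i * (v i - v' i) + (u i - u' i) * v' i| := by ring_nf
    _ ≤ |u i| * |v i - v' i| + |u i - u' i| * |v' i| := by
        rw [← abs_mul, ← abs_mul]; exact abs_add_le _ _
    _ ≤ C * δ + δ * (C + δ) :=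
        add_le_add (mul_le_mul (hu i) (hvv' i) (abs_nonneg _) ((abs_nonneg _).trans (hu i)))
          (mul_le_mul (huu' i) hv' (abs_nonneg _) hδ)
    _ = (2 * C + δ) * δ := by ring

theorem IsPosSemidefKernelOn.exists_shallowNet_dotProduct_near
    (hσ : ∀ f, ContinuousOn f S → f ∈ uniformClosureOn (neuralSpan σ (Fin p → ℝ)) S)
    {k : (Fin p → ℝ) → (Fin p → ℝ) → ℝ} (hk : IsPosSemidefKernelOn k S) (hS : IsCompact S)
    (hkc : ContinuousOn (fun z : (Fin p → ℝ) × (Fin p → ℝ) => k z.1 z.2) (S ×ˢ S)) {ε : ℝ}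
    (hε : 0 < ε) :
    ∃ (K m : ℕ) (A : Matrix (Fin K) (Fin m) ℝ) (B : Matrix (Fin m) (Fin p) ℝ) (c : Fin m → ℝ),
      ∀ x ∈ S, ∀ x' ∈ S, |k x x' - shallowNet σ A B c x ⬝ᵥ shallowNet σ A B c x'| < ε := by
  obtain ⟨K, F, hF, hkF⟩ := hk.exists_continuous_feature_near hS hkc (half_pos hε)
  obtain ⟨C, hC⟩ := hS.exists_bound_of_continuousOn hF.continuousOn
  have hFC : ∀ x ∈ S, ∀ l, |F x l| ≤ C := fun x hx l => (norm_le_pi_norm (F x) l).trans (hC x hx)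
  have hlim : Tendsto (fun δ => K * ((2 * C + δ) * δ)) (𝓝[>] 0) (𝓝 0) := by
    have : Continuous fun δ : ℝ => K * ((2 * C + δ) * δ) := by fun_prop
    exact (this.tendsto' 0 0 (by simp)).mono_left nhdsWithin_le_nhds
  obtain ⟨δ, hδε, hδ⟩ :=
    ((hlim.eventually (gt_mem_nhds (half_pos hε))).and self_mem_nhdsWithin).exists
  obtain ⟨m, A, B, c, hN⟩ := exists_shallowNet_near hσ hF.continuousOn hδ
  refine ⟨K, m, A, B, c, fun x hx x' hx' => ?_⟩
  have := abs_dotProduct_sub_dotProduct_le (hFC x hx) (hFC x' hx') (hN x hx) (hN x' hx')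
  rw [Fintype.card_fin] at this
  linarith [abs_sub_le (k x x') (F x ⬝ᵥ F x')
    (shallowNet σ A B c x ⬝ᵥ shallowNet σ A B c x'), hkF x hx x' hx']

end ShallowNet

section Continuity

variable {E Z : Type*} [TopologicalSpace E] [TopologicalSpace Z] {g : E → E → ℝ} {Y : Set E}

theorem ContinuousOn.comp₂ (hg : ContinuousOn (fun yy : E × E => g yy.1 yy.2) (Y ×ˢ Y))
    {f f' : Z → E} {T : Set Z} (hf : ContinuousOn f T) (hf' : ContinuousOn f' T)
    (hfY : MapsTo f T Y) (hf'Y : MapsTo f' T Y) : ContinuousOn (fun z => g (f z) (f' z)) T :=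
  hg.comp (hf.prodMk hf') fun _ hz => ⟨hfY hz, hf'Y hz⟩

theorem ContinuousOn.centeredKernel_comp
    (hg : ContinuousOn (fun yy : E × E => g yy.1 yy.2) (Y ×ˢ Y)) {y₀ : E} (hy₀ : y₀ ∈ Y)
    {f : Z → E} {T : Set Z} (hf : ContinuousOn f T) (hfY : MapsTo f T Y) :
    ContinuousOn (fun z : Z × Z => centeredKernel g y₀ (f z.1) (f z.2)) (T ×ˢ T) := by
  have h₁ : ContinuousOn (fun z : Z × Z => f z.1) (T ×ˢ T) :=
    hf.comp continuousOn_fst fun _ hz => hz.1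
  have h₂ : ContinuousOn (fun z : Z × Z => f z.2) (T ×ˢ T) :=
    hf.comp continuousOn_snd fun _ hz => hz.2
  have hm₁ : MapsTo (fun z : Z × Z => f z.1) (T ×ˢ T) Y := fun _ hz => hfY hz.1
  have hm₂ : MapsTo (fun z : Z × Z => f z.2) (T ×ˢ T) Y := fun _ hz => hfY hz.2
  have hm₀ : MapsTo (fun _ : Z × Z => y₀) (T ×ˢ T) Y := fun _ _ => hy₀
  exact (((hg.comp₂ h₁ h₂ hm₁ hm₂).sub (hg.comp₂ h₁ continuousOn_const hm₁ hm₀)).sub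
    (hg.comp₂ continuousOn_const h₂ hm₀ hm₂)).add continuousOn_const

end Continuity

theorem isCompact_setOf_forall_abs_le {ι : Type*} [Finite ι] (M : ℝ) :
    IsCompact {x : ι → ℝ | ∀ i, |x i| ≤ M} := by
  simpa [Set.pi, abs_le] using isCompact_univ_pi fun _ : ι => isCompact_Icc (a := -M) (b := M)

theorem exists_sips_near_of_posSemidef_add {p : ℕ} {σ : ℝ → ℝ} {S : Set (Fin p → ℝ)}
    (hσ : ∀ f, ContinuousOn f S → f ∈ uniformClosureOn (neuralSpan σ (Fin p → ℝ)) S)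
    (hS : IsCompact S) {h k : (Fin p → ℝ) → (Fin p → ℝ) → ℝ} {u : (Fin p → ℝ) → ℝ}
    (hk : IsPosSemidefKernelOn k S)
    (hkc : ContinuousOn (fun z : (Fin p → ℝ) × (Fin p → ℝ) => k z.1 z.2) (S ×ˢ S))
    (hu : ContinuousOn u S) (hdec : ∀ x ∈ S, ∀ x' ∈ S, h x x' = k x x' + u x + u x') {ε : ℝ}
    (hε : 0 < ε) :
    ∃ (K mf mu : ℕ) (A : Matrix (Fin K) (Fin mf) ℝ) (B : Matrix (Fin mf) (Fin p) ℝ)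
      (c : Fin mf → ℝ) (e : Fin mu → ℝ) (F : Matrix (Fin mu) (Fin p) ℝ) (o : Fin mu → ℝ),
      ∀ x ∈ S, ∀ x' ∈ S, |h x x' - (shallowNet σ A B c x ⬝ᵥ shallowNet σ A B c x'
        + e ⬝ᵥ (fun i => σ ((F *ᵥ x) i + o i)) + e ⬝ᵥ (fun i => σ ((F *ᵥ x') i + o i)))| < ε := by
  obtain ⟨K, mf, A, B, c, hkN⟩ := hk.exists_shallowNet_dotProduct_near hσ hS hkc (half_pos hε)
  obtain ⟨mu, E, F, o, huN⟩ := exists_shallowNet_near (F := fun x (_ : Fin 1) => u x) hσ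
    (continuousOn_pi.mpr fun _ => hu) (by positivity : 0 < ε / 4)
  refine ⟨K, mf, mu, A, B, c, E 0, F, o, fun x hx x' hx' => ?_⟩
  have hkx := abs_lt.mp (hkN x hx x' hx')
  have hux := abs_le.mp (huN x hx 0)
  have hux' := abs_le.mp (huN x' hx' 0)
  change |h x x' - (shallowNet σ A B c x ⬝ᵥ shallowNet σ A B c x'
    + shallowNet σ E F o x 0 + shallowNet σ E F o x' 0)| < ε
  rw [hdec x hx x' hx', abs_lt]
  exact ⟨by linarith [hkx.1, hux.1, hux'.1], by linarith [hkx.2, hux.2, hux'.2]⟩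

theorem approximation_theorem_for_SIPS_general
    (p Kstar : ℕ) (M : ℝ) (hM : 0 < M)
    (Y : Set (EuclideanSpace ℝ (Fin Kstar)))
    (fstar : (Fin p → ℝ) → EuclideanSpace ℝ (Fin Kstar))
    (hfstar_cont : ContinuousOn fstar {x : Fin p → ℝ | ∀ i, |x i| ≤ M})
    (hfstar_maps : ∀ x ∈ {x : Fin p → ℝ | ∀ i, |x i| ≤ M}, fstar x ∈ Y)
    (g : EuclideanSpace ℝ (Fin Kstar) → EuclideanSpace ℝ (Fin Kstar) → ℝ)
    (hg_symm : ∀ y ∈ Y, ∀ y' ∈ Y, g y y' = g y' y)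
    (hg_cont : ContinuousOn (fun yy : EuclideanSpace ℝ (Fin Kstar) × EuclideanSpace ℝ (Fin Kstar) =>
      g yy.1 yy.2) (Y ×ˢ Y))
    (hg_cpd : ∀ (n : ℕ) (c : Fin n → ℝ) (y : Fin n → EuclideanSpace ℝ (Fin Kstar)),
      (∑ i, c i = 0) → (∀ i, y i ∈ Y) → 0 ≤ ∑ i, ∑ j, c i * c j * g (y i) (y j))
    (σ : ℝ → ℝ)
    (hσ : (σ = fun z => max 0 z) ∨
      ((∃ a b, σ a ≠ σ b) ∧ Continuous σ ∧ (∃ C, ∀ z, |σ z| ≤ C) ∧ Monotone σ)) :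
    ∀ ε > (0 : ℝ), ∃ (K mf mu : ℕ) (A : Matrix (Fin K) (Fin mf) ℝ)
      (B : Matrix (Fin mf) (Fin p) ℝ) (c : Fin mf → ℝ)
      (e : Fin mu → ℝ) (F : Matrix (Fin mu) (Fin p) ℝ) (o : Fin mu → ℝ),
      ∀ x ∈ {x : Fin p → ℝ | ∀ i, |x i| ≤ M}, ∀ x' ∈ {x : Fin p → ℝ | ∀ i, |x i| ≤ M},
        |g (fstar x) (fstar x')
          - (dotProduct
              (A.mulVec fun i => σ (B.mulVec x i + c i))
              (A.mulVec fun i => σ (B.mulVec x' i + c i))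
            + dotProduct e (fun i => σ (F.mulVec x i + o i))
            + dotProduct e (fun i => σ (F.mulVec x' i + o i)))| < ε := by
  intro ε hε
  have hS := isCompact_setOf_forall_abs_le (ι := Fin p) M
  set y₀ := fstar 0
  have hy₀ : y₀ ∈ Y := hfstar_maps 0 fun _ => by simpa using hM.le
  refine exists_sips_near_of_posSemidef_add (u := fun x => g (fstar x) y₀ - g y₀ y₀ / 2)
    (fun f hf => mem_uniformClosureOn_neuralSpan_of_activation hσ hS hf) hS
    ((IsCondPosSemidefKernelOn.isPosSemidefKernelOn_centeredKernel hg_cpd hg_symm hy₀).comp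
      hfstar_maps)
    (hg_cont.centeredKernel_comp hy₀ hfstar_cont hfstar_maps)
    ((hg_cont.comp₂ hfstar_cont continuousOn_const hfstar_maps fun _ _ => hy₀).sub
      continuousOn_const) (fun x _ x' hx' => ?_) hε
  rw [centeredKernel, hg_symm y₀ hy₀ _ (hfstar_maps x' hx')]
  ring

/-- Approximation theorem for the shifted inner-product similarity (SIPS) model:
for a continuous `f* : [-M,M]ᵖ → Y` into a compact `Y ⊆ ℝ^{K*}` and a conditionally
positive definite kernel `g* : Y × Y → ℝ`, and an activation `σ` which is either ReLU or
non-constant, continuous, bounded and monotone increasing, for every `ε > 0` there are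
one-hidden-layer neural networks `f_NN(x) = A σ(Bx + c)` and `u_NN(x) = ⟨e, σ(Fx + o)⟩`
such that `|g*(f*(x), f*(x')) - (⟨f_NN(x), f_NN(x')⟩ + u_NN(x) + u_NN(x'))| < ε`
on the cube. -/
theorem approximation_theorem_for_SIPS
    (p Kstar : ℕ) (M : ℝ) (hM : 0 < M)
    (Y : Set (EuclideanSpace ℝ (Fin Kstar))) (hY : IsCompact Y)
    (fstar : (Fin p → ℝ) → EuclideanSpace ℝ (Fin Kstar))
    (hfstar_cont : ContinuousOn fstar {x : Fin p → ℝ | ∀ i, |x i| ≤ M})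
    (hfstar_maps : ∀ x ∈ {x : Fin p → ℝ | ∀ i, |x i| ≤ M}, fstar x ∈ Y)
    (g : EuclideanSpace ℝ (Fin Kstar) → EuclideanSpace ℝ (Fin Kstar) → ℝ)
    (hg_symm : ∀ y ∈ Y, ∀ y' ∈ Y, g y y' = g y' y)
    (hg_cont : ContinuousOn (fun yy : EuclideanSpace ℝ (Fin Kstar) × EuclideanSpace ℝ (Fin Kstar) =>
      g yy.1 yy.2) (Y ×ˢ Y))
    (hg_cpd : ∀ (n : ℕ) (c : Fin n → ℝ) (y : Fin n → EuclideanSpace ℝ (Fin Kstar)),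
      (∑ i, c i = 0) → (∀ i, y i ∈ Y) → 0 ≤ ∑ i, ∑ j, c i * c j * g (y i) (y j))
    (σ : ℝ → ℝ)
    (hσ : (σ = fun z => max 0 z) ∨
      ((∃ a b, σ a ≠ σ b) ∧ Continuous σ ∧ (∃ C, ∀ z, |σ z| ≤ C) ∧ Monotone σ)) :
    ∀ ε > (0 : ℝ), ∃ (K mf mu : ℕ) (A : Matrix (Fin K) (Fin mf) ℝ)
      (B : Matrix (Fin mf) (Fin p) ℝ) (c : Fin mf → ℝ)
      (e : Fin mu → ℝ) (F : Matrix (Fin mu) (Fin p) ℝ) (o : Fin mu → ℝ),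
      ∀ x ∈ {x : Fin p → ℝ | ∀ i, |x i| ≤ M}, ∀ x' ∈ {x : Fin p → ℝ | ∀ i, |x i| ≤ M},
        |g (fstar x) (fstar x')
          - (dotProduct
              (A.mulVec fun i => σ (B.mulVec x i + c i))
              (A.mulVec fun i => σ (B.mulVec x' i + c i))
            + dotProduct e (fun i => σ (F.mulVec x i + o i))
            + dotProduct e (fun i => σ (F.mulVec x' i + o i)))| < ε :=
  approximation_theorem_for_SIPS_general p Kstar M hM Y fstar hfstar_cont hfstar_maps g hg_symm
    hg_cont hg_cpd σ hσ
end

section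
/- (Approximation theorem for IPDS.) Let X = [-M,M]^p with M > 0, let Y ⊂ ℝ^{K*} be a compact set for some K* ∈ ℕ, let f* : X → Y be continuous, and let g* : Y × Y → ℝ be a kernel that is dominated by some positive definite kernel g, i.e., g − g* is positive definite. Let σ : ℝ → ℝ be either the ReLU function or a non-constant, continuous, bounded, monotonically increasing function. Then for every ε > 0 there exist K₊, K₋, m₊, m₋ ∈ ℕ and A ∈ ℝ^{K₊×m₊}, B ∈ ℝ^{m₊×p}, c ∈ ℝ^{m₊}, E ∈ ℝ^{K₋×m₋}, F ∈ ℝ^{m₋×p}, o ∈ ℝ^{m₋} such that, writing f_NN(x) = A σ(B x + c) and r_NN(x) = E σ(F x + o) with σ applied elementwise, |g*(f*(x), f*(x')) − (⟨f_NN(x), f_NN(x')⟩ − ⟨r_NN(x), r_NN(x')⟩)| < ε for all (x, x') ∈ X × X. -/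
/-
By Stone–Weierstrass, the kernel `H (x, x') = g* (f* x, f* x')` is uniformly close on the
compact set `K × K` to a trigonometric polynomial `∑ₖ αₖ cos (aₖ x + a'ₖ x' + bₖ)`, and since
`H` is symmetric we may replace that polynomial by its symmetrization. By
`cos (u + v) = cos u cos v - sin u sin v`, every symmetrized term is a difference of symmetric
products `φ x * ψ x' + ψ x * φ x'` of ridge functions, and polarization,
`2 (φ ⊙ ψ) = (φ + ψ) ⊗ (φ + ψ) - (φ - ψ) ⊗ (φ - ψ)`, turns each of these into a difference of
inner products of feature vectors. It remains to approximate continuous ridge functions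
`x ↦ g (Λ x)` by one-hidden-layer networks; on an interval, `g` is approximated by a staircase
`g a + ∑ᵢ (g tᵢ₊₁ - g tᵢ) τ (w (s - mᵢ))` built from steep copies of a squashing function `τ`
(a rescaling of `σ`, or `ReLU (z + 1) - ReLU z`).
-/

open Filter Topology

theorem abs_sub_sub_sum_le_of_switches {G τ : ℕ → ℝ} {N j : ℕ} (hj : j < N) {η₀ η : ℝ}
    (hη : 0 ≤ η) (hG : ∀ i < N, |G (i + 1) - G i| ≤ η₀) (hlt : ∀ i < j, |τ i - 1| ≤ η)
    (hgt : ∀ i < N, j < i → |τ i| ≤ η) (hτj : |τ j| ≤ 1) :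
    |G j - G 0 - ∑ i ∈ Finset.range N, (G (i + 1) - G i) * τ i| ≤ η₀ * (N * η + 1) := by
  have hη₀ : 0 ≤ η₀ := (abs_nonneg _).trans (hG j hj)
  have htelescope :
      G j - G 0 = ∑ i ∈ Finset.range N, (G (i + 1) - G i) * if i < j then 1 else 0 := by
    simp only [mul_ite, mul_one, mul_zero]
    rw [← Finset.sum_filter, ← Finset.sum_range_sub]
    congr 1
    ext i
    simp only [Finset.mem_filter, Finset.mem_range]
    omega
  have hterm : ∀ i ∈ Finset.range N, |(G (i + 1) - G i) * ((if i < j then 1 else 0) - τ i)| ≤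
      η₀ * (η + if i = j then 1 else 0) := by
    intro i hi
    rw [abs_mul]
    refine mul_le_mul (hG i (Finset.mem_range.1 hi)) ?_ (abs_nonneg _) hη₀
    rcases lt_trichotomy i j with h | rfl | h
    · simpa [h, h.ne, abs_sub_comm] using hlt i h
    · simp only [lt_irrefl, if_false, if_true, zero_sub, abs_neg]
      linarith
    · simpa [not_lt.2 h.le, h.ne'] using hgt i (Finset.mem_range.1 hi) h
  calc |G j - G 0 - ∑ i ∈ Finset.range N, (G (i + 1) - G i) * τ i|
      = |∑ i ∈ Finset.range N, (G (i + 1) - G i) * ((if i < j then 1 else 0) - τ i)| := by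
        simp only [htelescope, mul_sub, Finset.sum_sub_distrib]
    _ ≤ ∑ i ∈ Finset.range N, η₀ * (η + if i = j then 1 else 0) :=
        (Finset.abs_sum_le_sum_abs _ _).trans (Finset.sum_le_sum hterm)
    _ = η₀ * (N * η + 1) := by
        rw [← Finset.mul_sum, Finset.sum_add_distrib, Finset.sum_const, Finset.card_range,
          Finset.sum_ite_eq', if_pos (Finset.mem_range.2 hj), nsmul_eq_mul]

theorem exists_uniform_partition {a b δ : ℝ} (hab : a < b) (hδ : 0 < δ) :
    ∃ (N : ℕ) (h : ℝ), 0 < N ∧ 0 < h ∧ h ≤ δ ∧ a + N * h = b := by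
  obtain ⟨N, hN⟩ := exists_nat_gt ((b - a) / δ)
  have hNpos : (0 : ℝ) < N := (div_pos (sub_pos.2 hab) hδ).trans hN
  refine ⟨N, (b - a) / N, by exact_mod_cast hNpos, div_pos (sub_pos.2 hab) hNpos, ?_, ?_⟩
  · rw [div_lt_iff₀ hδ] at hN
    exact (div_le_iff₀ hNpos).2 (by linarith)
  · field_simp
    ring

theorem exists_lt_mem_Icc_grid {a h s : ℝ} {N : ℕ} (hh : 0 < h) (hN : 0 < N)
    (hs : s ∈ Set.Icc a (a + N * h)) :
    ∃ j < N, a + j * h ≤ s ∧ s ≤ a + (j + 1) * h := by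
  obtain ⟨hs₁, hs₂⟩ := hs
  have hq : 0 ≤ (s - a) / h := div_nonneg (by linarith) hh.le
  rcases lt_or_ge ⌊(s - a) / h⌋₊ N with hk | hk
  · refine ⟨_, hk, ?_, ?_⟩
    · have := Nat.floor_le hq
      rw [le_div_iff₀ hh] at this
      linarith
    · have := Nat.lt_floor_add_one ((s - a) / h)
      rw [div_lt_iff₀ hh] at this
      linarith
  · have hN' : ((N - 1 : ℕ) : ℝ) + 1 = N := by
      rw [Nat.cast_sub hN, Nat.cast_one, sub_add_cancel]
    refine ⟨N - 1, by omega, ?_, by rwa [hN']⟩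
    have := (Nat.cast_le.2 hk).trans (Nat.floor_le hq)
    rw [le_div_iff₀ hh] at this
    nlinarith

theorem exists_forall_abs_sub_le_of_tendsto {τ : ℝ → ℝ} (h₀ : Tendsto τ atBot (𝓝 0))
    (h₁ : Tendsto τ atTop (𝓝 1)) {η : ℝ} (hη : 0 < η) :
    ∃ Z, 0 ≤ Z ∧ (∀ z, Z ≤ z → |τ z - 1| ≤ η) ∧ ∀ z, z ≤ -Z → |τ z| ≤ η := by
  obtain ⟨Z₁, hZ₁⟩ := eventually_atTop.1 (h₁.eventually (Metric.closedBall_mem_nhds 1 hη))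
  obtain ⟨Z₀, hZ₀⟩ := eventually_atBot.1 (h₀.eventually (Metric.closedBall_mem_nhds 0 hη))
  refine ⟨max (max Z₁ (-Z₀)) 0, le_max_right _ _, fun z hz => ?_, fun z hz => ?_⟩
  · simpa [Real.dist_eq] using hZ₁ z ((le_max_left _ _).trans ((le_max_left _ _).trans hz))
  · simpa [Real.dist_eq] using
      hZ₀ z (by linarith [le_max_right Z₁ (-Z₀), le_max_left (max Z₁ (-Z₀)) 0])

theorem exists_add_sum_squash_near {τ : ℝ → ℝ} (h₀ : Tendsto τ atBot (𝓝 0))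
    (h₁ : Tendsto τ atTop (𝓝 1)) (hτ : ∀ z, |τ z| ≤ 1) {g : ℝ → ℝ} {a b : ℝ} (hab : a < b)
    (hg : ContinuousOn g (Set.Icc a b)) {ε : ℝ} (hε : 0 < ε) :
    ∃ (c w : ℝ) (N : ℕ) (Δ β : ℕ → ℝ), ∀ s ∈ Set.Icc a b,
      |g s - (c + ∑ i ∈ Finset.range N, Δ i * τ (w * s + β i))| ≤ ε := by
  obtain ⟨δ, hδ, hgδ⟩ := Metric.uniformContinuousOn_iff_le.1
    (isCompact_Icc.uniformContinuousOn_of_continuous hg) (ε / 3) (by positivity)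
  obtain ⟨N, h, hNpos, hh, hhδ, htN⟩ := exists_uniform_partition hab hδ
  set t : ℕ → ℝ := fun i => a + i * h
  have ht_mono : Monotone t := fun i k hik => by simp only [t]; gcongr
  have ht_succ (i : ℕ) : t (i + 1) = t i + h := by simp only [t]; push_cast; ring
  have ht : ∀ i ≤ N, t i ∈ Set.Icc a b := fun i hi =>
    ⟨le_add_of_nonneg_right (by positivity), htN ▸ ht_mono hi⟩
  -- the steepness `w` makes the switch at the midpoint of each grid cell sharp to `1 / N`
  obtain ⟨Z, hZ, hZ₁, hZ₀⟩ := exists_forall_abs_sub_le_of_tendsto h₀ h₁ (η := 1 / N) (by positivity)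
  set w := 2 * Z / h
  have hw : 0 ≤ w := by positivity
  have hwh : w * (h / 2) = Z := by simp only [w]; field_simp
  refine ⟨g a, w, N, fun i => g (t (i + 1)) - g (t i), fun i => -(w * (t i + h / 2)),
    fun s hs => ?_⟩
  obtain ⟨j, hj, hjs, hsj⟩ := exists_lt_mem_Icc_grid hh hNpos (htN.symm ▸ hs)
  replace hsj : s ≤ t j + h := by simp only [t]; linarith
  have hnear : |g s - g (t j)| ≤ ε / 3 := by
    refine hgδ s hs (t j) (ht j hj.le) ?_
    rw [Real.dist_eq, abs_of_nonneg (by linarith)]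
    linarith
  have hsum := abs_sub_sub_sum_le_of_switches (G := fun i => g (t i))
    (τ := fun i => τ (w * s + -(w * (t i + h / 2)))) hj (η₀ := ε / 3) (by positivity)
    (fun i hi => by
      refine hgδ _ (ht (i + 1) hi) _ (ht i hi.le) ?_
      rw [ht_succ, Real.dist_eq, add_sub_cancel_left, abs_of_pos hh]
      exact hhδ)
    (fun i hi => hZ₁ _ (by
      have := ht_succ i ▸ ht_mono (Nat.succ_le_of_lt hi)
      nlinarith))
    (fun i _ hi => hZ₀ _ (by
      have := ht_succ j ▸ ht_mono (Nat.succ_le_of_lt hi)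
      nlinarith)) (hτ _)
  have ht0 : t 0 = a := by simp [t]
  rw [ht0, sub_sub] at hsum
  calc _ ≤ |g s - g (t j)| + |g (t j) - (g a + _)| := abs_sub_le _ _ _
    _ ≤ ε / 3 + ε / 3 * (N * (1 / N) + 1) := add_le_add hnear hsum
    _ = ε := by field_simp; ring

theorem exists_squash_of_monotone {σ : ℝ → ℝ} (hne : ∃ a b, σ a ≠ σ b)
    (hbdd : ∃ C, ∀ z, |σ z| ≤ C) (hmono : Monotone σ) :
    ∃ l L : ℝ, l < L ∧ Tendsto (fun z => (σ z - l) / (L - l)) atBot (𝓝 0) ∧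
      Tendsto (fun z => (σ z - l) / (L - l)) atTop (𝓝 1) ∧ ∀ z, |(σ z - l) / (L - l)| ≤ 1 := by
  obtain ⟨C, hC⟩ := hbdd
  have hbddA : BddAbove (Set.range σ) := ⟨C, by rintro _ ⟨z, rfl⟩; exact (abs_le.1 (hC z)).2⟩
  have hbddB : BddBelow (Set.range σ) := ⟨-C, by rintro _ ⟨z, rfl⟩; exact (abs_le.1 (hC z)).1⟩
  have hl (z : ℝ) : ⨅ z, σ z ≤ σ z := ciInf_le hbddB z
  have hL (z : ℝ) : σ z ≤ ⨆ z, σ z := le_ciSup hbddA z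
  have hlL : 0 < (⨆ z, σ z) - ⨅ z, σ z := by
    obtain ⟨a, b, hab⟩ := hne
    rcases hab.lt_or_gt with h | h <;> linarith [hl a, hL b, hl b, hL a]
  refine ⟨⨅ z, σ z, ⨆ z, σ z, sub_pos.1 hlL, ?_, ?_, fun z => ?_⟩
  · simpa using ((tendsto_atBot_ciInf hmono hbddB).sub_const (⨅ z, σ z)).div_const _
  · have h := ((tendsto_atTop_ciSup hmono hbddA).sub_const (⨅ z, σ z)).div_const
      ((⨆ z, σ z) - ⨅ z, σ z)
    rwa [div_self hlL.ne'] at h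
  · rw [abs_le, le_div_iff₀ hlL, div_le_iff₀ hlL]
    constructor <;> linarith [hl z, hL z]

namespace Submodule

variable {X : Type*}

def uniformClosureOn (V : Submodule ℝ (X → ℝ)) (S : Set X) : Submodule ℝ (X → ℝ) where
  carrier := {f | ∀ ε > 0, ∃ v ∈ V, ∀ x ∈ S, |f x - v x| ≤ ε}
  zero_mem' ε hε := ⟨0, V.zero_mem, fun x _ => by simpa using hε.le⟩
  add_mem' {f g} hf hg ε hε := by
    obtain ⟨v, hv, hfv⟩ := hf (ε / 2) (half_pos hε)
    obtain ⟨w, hw, hgw⟩ := hg (ε / 2) (half_pos hε)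
    refine ⟨v + w, V.add_mem hv hw, fun x hx => ?_⟩
    calc |(f + g) x - (v + w) x| = |(f x - v x) + (g x - w x)| := by
          simp only [Pi.add_apply]; ring_nf
      _ ≤ |f x - v x| + |g x - w x| := abs_add_le _ _
      _ ≤ ε := by linarith [hfv x hx, hgw x hx]
  smul_mem' c f hf ε hε := by
    obtain ⟨v, hv, hfv⟩ := hf (ε / (|c| + 1)) (by positivity)
    refine ⟨c • v, V.smul_mem c hv, fun x hx => ?_⟩
    have hc : |c| * (ε / (|c| + 1)) ≤ ε := by
      rw [mul_div_assoc', div_le_iff₀ (by positivity)]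
      nlinarith [abs_nonneg c]
    calc |(c • f) x - (c • v) x| = |c| * |f x - v x| := by
          simp only [Pi.smul_apply, smul_eq_mul, ← mul_sub, abs_mul]
      _ ≤ ε := (mul_le_mul_of_nonneg_left (hfv x hx) (abs_nonneg c)).trans hc

variable {V : Submodule ℝ (X → ℝ)} {S : Set X}

theorem uniformClosureOn_uniformClosureOn_le :
    (V.uniformClosureOn S).uniformClosureOn S ≤ V.uniformClosureOn S := by
  intro f hf ε hε
  obtain ⟨g, hg, hfg⟩ := hf (ε / 2) (half_pos hε)
  obtain ⟨v, hv, hgv⟩ := hg (ε / 2) (half_pos hε)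
  refine ⟨v, hv, fun x hx => ?_⟩
  calc |f x - v x| ≤ |f x - g x| + |g x - v x| := abs_sub_le _ _ _
    _ ≤ ε := by linarith [hfg x hx, hgv x hx]

/-- The kernels `⟪f x, f x'⟫ - ⟪r x, r x'⟫` of feature maps `f`, `r` with coordinates in `V`. -/
def differenceKernels (V : Submodule ℝ (X → ℝ)) : Submodule ℝ (X × X → ℝ) where
  carrier := {k | ∃ (m n : ℕ) (w : Fin m → V) (v : Fin n → V),
    k = fun q => ∑ i, (w i : X → ℝ) q.1 * (w i : X → ℝ) q.2
      - ∑ j, (v j : X → ℝ) q.1 * (v j : X → ℝ) q.2}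
  zero_mem' := ⟨0, 0, Fin.elim0, Fin.elim0, by ext; simp⟩
  add_mem' := by
    rintro _ _ ⟨m, n, w, v, rfl⟩ ⟨m', n', w', v', rfl⟩
    refine ⟨m + m', n + n', Fin.append w w', Fin.append v v', ?_⟩
    ext q
    simp only [Pi.add_apply, Fin.sum_univ_add, Fin.append_left, Fin.append_right]
    ring
  smul_mem' := by
    rintro c _ ⟨m, n, w, v, rfl⟩
    rcases le_or_gt 0 c with hc | hc
    · refine ⟨m, n, fun i => √c • w i, fun j => √c • v j, ?_⟩
      ext q
      have key : ∀ a b : ℝ, (√c * a) * (√c * b) = c * (a * b) := fun a b => by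
        rw [mul_mul_mul_comm, Real.mul_self_sqrt hc]
      simp only [Pi.smul_apply, smul_eq_mul, SetLike.val_smul, key, ← Finset.mul_sum, mul_sub]
    · refine ⟨n, m, fun j => √(-c) • v j, fun i => √(-c) • w i, ?_⟩
      ext q
      have key : ∀ a b : ℝ, (√(-c) * a) * (√(-c) * b) = -c * (a * b) := fun a b => by
        rw [mul_mul_mul_comm, Real.mul_self_sqrt (by linarith)]
      simp only [Pi.smul_apply, smul_eq_mul, SetLike.val_smul, key, ← Finset.mul_sum]
      ring

end Submodule

theorem abs_mul_sub_mul_le {u v u' v' C δ : ℝ} (hu : |u| ≤ C) (hv : |v| ≤ C)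
    (hu' : |u - u'| ≤ δ) (hv' : |v - v'| ≤ δ) (hδ : δ ≤ 1) :
    |u * v - u' * v'| ≤ (2 * C + 1) * δ := by
  have hδ0 : 0 ≤ δ := (abs_nonneg _).trans hu'
  have hu'C : |u'| ≤ C + 1 := by
    have := abs_sub_abs_le_abs_sub u' u
    rw [abs_sub_comm] at this
    linarith
  have hC : 0 ≤ C := (abs_nonneg u).trans hu
  calc |u * v - u' * v'| = |(u - u') * v + u' * (v - v')| := by ring_nf
    _ ≤ |u - u'| * |v| + |u'| * |v - v'| := by
        simpa only [abs_mul] using abs_add_le ((u - u') * v) (u' * (v - v'))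
    _ ≤ δ * C + (C + 1) * δ := by gcongr
    _ = (2 * C + 1) * δ := by ring

section SymmTensor

variable {X : Type*} {V : Submodule ℝ (X → ℝ)} {S : Set X}

def symmTensor (φ ψ : X → ℝ) : X × X → ℝ := fun q => φ q.1 * ψ q.2 + ψ q.1 * φ q.2

theorem symmTensor_mem_differenceKernels {φ ψ : X → ℝ} (hφ : φ ∈ V) (hψ : ψ ∈ V) :
    symmTensor φ ψ ∈ V.differenceKernels := by
  have h : (2 : ℝ)⁻¹ • (fun q : X × X => ∑ _i : Fin 1, (φ + ψ) q.1 * (φ + ψ) q.2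
      - ∑ _j : Fin 1, (φ - ψ) q.1 * (φ - ψ) q.2) = symmTensor φ ψ := by
    ext q
    simp only [symmTensor, Pi.smul_apply, Pi.add_apply, Pi.sub_apply, Finset.univ_unique,
      Finset.sum_singleton, smul_eq_mul]
    ring
  rw [← h]
  exact V.differenceKernels.smul_mem _
    ⟨1, 1, fun _ => ⟨φ + ψ, V.add_mem hφ hψ⟩, fun _ => ⟨φ - ψ, V.sub_mem hφ hψ⟩, rfl⟩

theorem symmTensor_mem_uniformClosureOn {φ ψ : X → ℝ} (hφ : φ ∈ V.uniformClosureOn S)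
    (hψ : ψ ∈ V.uniformClosureOn S) {C : ℝ} (hφC : ∀ x ∈ S, |φ x| ≤ C)
    (hψC : ∀ x ∈ S, |ψ x| ≤ C) :
    symmTensor φ ψ ∈ V.differenceKernels.uniformClosureOn (S ×ˢ S) := by
  intro ε hε
  replace hφC x hx : |φ x| ≤ |C| := (hφC x hx).trans (le_abs_self C)
  replace hψC x hx : |ψ x| ≤ |C| := (hψC x hx).trans (le_abs_self C)
  set δ := min 1 (ε / (2 * (2 * |C| + 1)))
  have hδ : 0 < δ := lt_min one_pos (by positivity)
  obtain ⟨φ', hφ'V, hφφ'⟩ := hφ δ hδ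
  obtain ⟨ψ', hψ'V, hψψ'⟩ := hψ δ hδ
  refine ⟨symmTensor φ' ψ', symmTensor_mem_differenceKernels hφ'V hψ'V, ?_⟩
  rintro ⟨x, x'⟩ ⟨hx, hx'⟩
  have h1 := abs_mul_sub_mul_le (hφC x hx) (hψC x' hx') (hφφ' x hx) (hψψ' x' hx') (min_le_left _ _)
  have h2 := abs_mul_sub_mul_le (hψC x hx) (hφC x' hx') (hψψ' x hx) (hφφ' x' hx') (min_le_left _ _)
  calc |symmTensor φ ψ (x, x') - symmTensor φ' ψ' (x, x')|
      ≤ |φ x * ψ x' - φ' x * ψ' x'| + |ψ x * φ x' - ψ' x * φ' x'| := by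
        simp only [symmTensor]
        exact (abs_add_le _ _).trans_eq' (by ring_nf)
    _ ≤ 2 * ((2 * |C| + 1) * δ) := by linarith
    _ ≤ 2 * ((2 * |C| + 1) * (ε / (2 * (2 * |C| + 1)))) := by gcongr; exact min_le_right _ _
    _ = ε := by field_simp

end SymmTensor

section TrigPolys

variable (F : Type*) [TopologicalSpace F] [AddCommGroup F] [Module ℝ F]

def trigPolys : Submodule ℝ (F → ℝ) :=
  Submodule.span ℝ (Set.range fun p : (F →L[ℝ] ℝ) × ℝ => fun z => Real.cos (p.1 z + p.2))

variable {F}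

theorem cos_mem_trigPolys (Λ : F →L[ℝ] ℝ) (b : ℝ) :
    (fun z => Real.cos (Λ z + b)) ∈ trigPolys F :=
  Submodule.subset_span ⟨(Λ, b), rfl⟩

theorem one_mem_trigPolys : (1 : F → ℝ) ∈ trigPolys F := by
  convert cos_mem_trigPolys (0 : F →L[ℝ] ℝ) 0
  simp

theorem mul_mem_trigPolys {f g : F → ℝ} (hf : f ∈ trigPolys F) (hg : g ∈ trigPolys F) :
    f * g ∈ trigPolys F := by
  suffices h : trigPolys F * trigPolys F ≤ trigPolys F from h (Submodule.mul_mem_mul hf hg)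
  rw [trigPolys, Submodule.span_mul_span, Submodule.span_le]
  rintro _ ⟨_, ⟨⟨Λ, b⟩, rfl⟩, _, ⟨⟨Λ', b'⟩, rfl⟩, rfl⟩
  dsimp only
  have h : (fun z => Real.cos (Λ z + b)) * (fun z => Real.cos (Λ' z + b')) =
      (2 : ℝ)⁻¹ • ((fun z => Real.cos ((Λ + Λ') z + (b + b')))
        + fun z => Real.cos ((Λ - Λ') z + (b - b'))) := by
    ext z
    have key (u v : ℝ) :
        Real.cos u * Real.cos v = 2⁻¹ * (Real.cos (u + v) + Real.cos (u - v)) := by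
      rw [Real.cos_add, Real.cos_sub]
      ring
    simp only [Pi.mul_apply, Pi.smul_apply, Pi.add_apply, add_apply, sub_apply, smul_eq_mul, key]
    ring_nf
  rw [SetLike.mem_coe, h]
  exact Submodule.smul_mem _ _ (Submodule.add_mem _ (cos_mem_trigPolys _ _) (cos_mem_trigPolys _ _))

theorem exists_cos_ne_cos [SeparatingDual ℝ F] {x y : F} (hxy : x ≠ y) :
    ∃ (Λ : F →L[ℝ] ℝ) (b : ℝ), Real.cos (Λ x + b) ≠ Real.cos (Λ y + b) := by
  obtain ⟨Λ, hΛ⟩ := SeparatingDual.exists_separating_of_ne (R := ℝ) hxy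
  have hd : Λ x - Λ y ≠ 0 := sub_ne_zero.2 hΛ
  -- rescale so that `x` and `y` land on `π` and `0`
  refine ⟨(Real.pi / (Λ x - Λ y)) • Λ, -(Real.pi / (Λ x - Λ y) * Λ y), ?_⟩
  have hx : Real.pi / (Λ x - Λ y) * Λ x + -(Real.pi / (Λ x - Λ y) * Λ y) = Real.pi := by
    rw [← mul_neg, ← mul_add, ← sub_eq_add_neg, div_mul_cancel₀ _ hd]
  simp only [smul_apply, smul_eq_mul, hx, add_neg_cancel, Real.cos_pi, Real.cos_zero]
  norm_num

end TrigPolys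

theorem mem_uniformClosureOn_trigPolys {F : Type*} [NormedAddCommGroup F] [NormedSpace ℝ F]
    {T : Set F} (hT : IsCompact T) {H : F → ℝ} (hH : ContinuousOn H T) :
    H ∈ (trigPolys F).uniformClosureOn T := by
  intro ε hε
  obtain ⟨H', hH'⟩ := ContinuousMap.exists_restrict_eq hT.isClosed ⟨T.domRestrict H, hH.domRestrict⟩
  let A : Subalgebra ℝ C(F, ℝ) := ((trigPolys F).toSubalgebra one_mem_trigPolys
    fun _ _ => mul_mem_trigPolys).comap (ContinuousMap.coeFnAlgHom ℝ)
  have hA : A.SeparatesPoints := by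
    intro x y hxy
    obtain ⟨Λ, b, hΛb⟩ := exists_cos_ne_cos hxy
    exact ⟨_, ⟨⟨fun z => Real.cos (Λ z + b), by fun_prop⟩, cos_mem_trigPolys Λ b, rfl⟩, hΛb⟩
  obtain ⟨f, hf, hfH⟩ :=
    ContinuousMap.exists_mem_subalgebra_near_continuous_of_isCompact_of_separatesPoints hA H' hT hε
  refine ⟨f, hf, fun z hz => ?_⟩
  have hHz : H' z = H z := DFunLike.congr_fun hH' ⟨z, hz⟩
  rw [abs_sub_comm, ← hHz]
  exact (hfH z hz).le

theorem add_comp_swap_mem_of_mem_trigPolys {E : Type*} [TopologicalSpace E] [AddCommGroup E]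
    [Module ℝ E] {V : Submodule ℝ (E → ℝ)} {S : Set E}
    (hV : ∀ g : ℝ → ℝ, Continuous g → ∀ Λ : E →L[ℝ] ℝ, g ∘ Λ ∈ V.uniformClosureOn S)
    {T : E × E → ℝ} (hT : T ∈ trigPolys (E × E)) :
    T + T ∘ Prod.swap ∈ V.differenceKernels.uniformClosureOn (S ×ˢ S) := by
  let symmetrize : (E × E → ℝ) →ₗ[ℝ] E × E → ℝ := LinearMap.id + LinearMap.funLeft ℝ ℝ Prod.swap
  suffices h : trigPolys (E × E) ≤
      (V.differenceKernels.uniformClosureOn (S ×ˢ S)).comap symmetrize from h hT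
  refine Submodule.span_le.2 ?_
  rintro _ ⟨⟨Λ, b⟩, rfl⟩
  set u := Λ.comp (ContinuousLinearMap.inl ℝ E E)
  set v := Λ.comp (ContinuousLinearMap.inr ℝ E E)
  have hΛ (x x' : E) : Λ (x, x') = u x + v x' := by
    simp [u, v, ← map_add]
  have key : symmetrize (fun z => Real.cos (Λ z + b)) =
      symmTensor (Real.cos ∘ u) ((fun t => Real.cos (t + b)) ∘ v)
        - symmTensor (Real.sin ∘ u) ((fun t => Real.sin (t + b)) ∘ v) := by
    ext ⟨x, x'⟩
    simp only [symmetrize, LinearMap.add_apply, LinearMap.id_apply, LinearMap.funLeft_apply,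
      Pi.add_apply, Pi.sub_apply, Function.comp_apply, Prod.swap_prod_mk, symmTensor, hΛ]
    rw [add_assoc, add_assoc, Real.cos_add (u x), Real.cos_add (u x')]
    ring
  have hbound (f : ℝ → ℝ) (hf : ∀ t, |f t| ≤ 1) (w : E → ℝ) : ∀ x ∈ S, |(f ∘ w) x| ≤ 1 :=
    fun x _ => hf (w x)
  rw [SetLike.mem_coe, Submodule.mem_comap, key]
  refine Submodule.sub_mem _ ?_ ?_
  · exact symmTensor_mem_uniformClosureOn (hV _ Real.continuous_cos u)
      (hV _ (by fun_prop) v) (hbound _ Real.abs_cos_le_one u)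
      (hbound _ (fun _ => Real.abs_cos_le_one _) v)
  · exact symmTensor_mem_uniformClosureOn (hV _ Real.continuous_sin u)
      (hV _ (by fun_prop) v) (hbound _ Real.abs_sin_le_one u)
      (hbound _ (fun _ => Real.abs_sin_le_one _) v)

theorem mem_uniformClosureOn_differenceKernels {E : Type*} [NormedAddCommGroup E]
    [NormedSpace ℝ E] {V : Submodule ℝ (E → ℝ)} {S : Set E} (hS : IsCompact S)
    (hV : ∀ g : ℝ → ℝ, Continuous g → ∀ Λ : E →L[ℝ] ℝ, g ∘ Λ ∈ V.uniformClosureOn S)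
    {H : E × E → ℝ} (hH : ContinuousOn H (S ×ˢ S))
    (hHsymm : ∀ x ∈ S, ∀ x' ∈ S, H (x, x') = H (x', x)) :
    H ∈ V.differenceKernels.uniformClosureOn (S ×ˢ S) := by
  refine Submodule.uniformClosureOn_uniformClosureOn_le fun ε hε => ?_
  obtain ⟨T, hT, hHT⟩ := mem_uniformClosureOn_trigPolys (hS.prod hS) hH ε hε
  refine ⟨(2 : ℝ)⁻¹ • (T + T ∘ Prod.swap),
    Submodule.smul_mem _ _ (add_comp_swap_mem_of_mem_trigPolys hV hT), ?_⟩
  rintro ⟨x, x'⟩ ⟨hx, hx'⟩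
  have h₁ := hHT (x, x') ⟨hx, hx'⟩
  have h₂ := hHT (x', x) ⟨hx', hx⟩
  rw [← hHsymm x hx x' hx'] at h₂
  calc |H (x, x') - ((2 : ℝ)⁻¹ • (T + T ∘ Prod.swap)) (x, x')|
      = |(H (x, x') - T (x, x')) + (H (x, x') - T (x', x))| / 2 := by
        simp only [Pi.smul_apply, Pi.add_apply, Function.comp_apply, Prod.swap_prod_mk,
          smul_eq_mul]
        rw [← abs_two, ← abs_div, abs_two]
        ring_nf
    _ ≤ ε := by linarith [abs_add_le (H (x, x') - T (x, x')) (H (x, x') - T (x', x))]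

section ShallowNets

variable (σ : ℝ → ℝ) (E : Type*) [TopologicalSpace E] [AddCommGroup E] [Module ℝ E]

def shallowNets : Submodule ℝ (E → ℝ) :=
  Submodule.span ℝ (Set.range fun p : (E →L[ℝ] ℝ) × ℝ => fun x => σ (p.1 x + p.2))

variable {σ E}

theorem ridge_mem_shallowNets (Λ : E →L[ℝ] ℝ) (b : ℝ) :
    (fun x => σ (Λ x + b)) ∈ shallowNets σ E :=
  Submodule.subset_span ⟨(Λ, b), rfl⟩

theorem one_mem_shallowNets {z : ℝ} (hz : σ z ≠ 0) : (1 : E → ℝ) ∈ shallowNets σ E := by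
  have h : (1 : E → ℝ) = (σ z)⁻¹ • fun x => σ ((0 : E →L[ℝ] ℝ) x + z) := by
    ext
    simp [hz]
  rw [h]
  exact Submodule.smul_mem _ _ (ridge_mem_shallowNets _ _)

theorem comp_mem_uniformClosureOn_shallowNets_of_squash {τ : ℝ → ℝ}
    (h₀ : Tendsto τ atBot (𝓝 0)) (h₁ : Tendsto τ atTop (𝓝 1)) (hτ : ∀ z, |τ z| ≤ 1)
    (hτσ : ∀ (Λ : E →L[ℝ] ℝ) b, (fun x => τ (Λ x + b)) ∈ shallowNets σ E)
    (h1 : (1 : E → ℝ) ∈ shallowNets σ E) {S : Set E} (hS : IsCompact S) {g : ℝ → ℝ}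
    (hg : Continuous g) (Λ : E →L[ℝ] ℝ) :
    g ∘ Λ ∈ (shallowNets σ E).uniformClosureOn S := by
  intro ε hε
  obtain ⟨C, hC⟩ := hS.exists_bound_of_continuousOn Λ.continuous.continuousOn
  obtain ⟨c, w, N, Δ, β, hgw⟩ := exists_add_sum_squash_near h₀ h₁ hτ
    (a := -(|C| + 1)) (b := |C| + 1) (by linarith [abs_nonneg C]) hg.continuousOn hε
  refine ⟨c • 1 + ∑ i ∈ Finset.range N, Δ i • fun x => τ ((w • Λ) x + β i),
    Submodule.add_mem _ (Submodule.smul_mem _ c h1)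
      (Submodule.sum_mem _ fun i _ => Submodule.smul_mem _ _ (hτσ _ _)), fun x hx => ?_⟩
  have hΛx : Λ x ∈ Set.Icc (-(|C| + 1)) (|C| + 1) := by
    have := (hC x hx).trans (le_abs_self C)
    rw [Real.norm_eq_abs, abs_le] at this
    constructor <;> linarith
  simpa [Finset.sum_apply] using hgw (Λ x) hΛx

theorem comp_mem_uniformClosureOn_shallowNets_relu {S : Set E} (hS : IsCompact S) {g : ℝ → ℝ}
    (hg : Continuous g) (Λ : E →L[ℝ] ℝ) :
    g ∘ Λ ∈ (shallowNets (fun z => max 0 z) E).uniformClosureOn S := by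
  -- the clipped ramp `max 0 (z + 1) - max 0 z` is `0` on `(-∞, -1]` and `1` on `[0, ∞)`
  set τ : ℝ → ℝ := fun z => max 0 (z + 1) - max 0 z
  have h₀ : Tendsto τ atBot (𝓝 0) := tendsto_const_nhds.congr' <|
    (eventually_le_atBot (-1)).mono fun z hz => by
      simp [τ, max_eq_left (by linarith : z + 1 ≤ 0), max_eq_left (by linarith : z ≤ 0)]
  have h₁ : Tendsto τ atTop (𝓝 1) := tendsto_const_nhds.congr' <|
    (eventually_ge_atTop 0).mono fun z hz => by
      simp [τ, max_eq_right (by linarith : 0 ≤ z + 1), max_eq_right hz]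
  have hτ (z : ℝ) : |τ z| ≤ 1 := by
    simp only [τ, abs_le]
    constructor <;> cases max_cases 0 (z + 1) <;> cases max_cases 0 z <;> linarith
  refine comp_mem_uniformClosureOn_shallowNets_of_squash h₀ h₁ hτ (fun Λ b => ?_)
    (one_mem_shallowNets (z := 1) (by norm_num)) hS hg Λ
  have h : (fun x => τ (Λ x + b)) =
      (fun x => max 0 (Λ x + (b + 1))) - fun x => max 0 (Λ x + b) := by
    ext x
    simp only [τ, Pi.sub_apply, add_assoc]
  rw [h]
  exact Submodule.sub_mem _ (ridge_mem_shallowNets _ _) (ridge_mem_shallowNets _ _)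

theorem comp_mem_uniformClosureOn_shallowNets_of_monotone (hne : ∃ a b, σ a ≠ σ b)
    (hbdd : ∃ C, ∀ z, |σ z| ≤ C) (hmono : Monotone σ) {S : Set E} (hS : IsCompact S)
    {g : ℝ → ℝ} (hg : Continuous g) (Λ : E →L[ℝ] ℝ) :
    g ∘ Λ ∈ (shallowNets σ E).uniformClosureOn S := by
  obtain ⟨l, L, hlL, h₀, h₁, hτ⟩ := exists_squash_of_monotone hne hbdd hmono
  obtain ⟨z, hz⟩ : ∃ z, σ z ≠ 0 := by
    by_contra! h
    obtain ⟨a, b, hab⟩ := hne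
    exact hab (by rw [h a, h b])
  have h1 : (1 : E → ℝ) ∈ shallowNets σ E := one_mem_shallowNets hz
  refine comp_mem_uniformClosureOn_shallowNets_of_squash h₀ h₁ hτ (fun Λ b => ?_) h1 hS hg Λ
  have h : (fun x => (σ (Λ x + b) - l) / (L - l)) =
      (L - l)⁻¹ • ((fun x => σ (Λ x + b)) - l • 1) := by
    ext x
    simp only [Pi.smul_apply, Pi.sub_apply, Pi.one_apply, smul_eq_mul, mul_one]
    ring
  rw [h]
  exact Submodule.smul_mem _ _
    (Submodule.sub_mem _ (ridge_mem_shallowNets _ _) (Submodule.smul_mem _ _ h1))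

end ShallowNets

theorem exists_matrix_eq_of_mem_shallowNets {σ : ℝ → ℝ} {p m : ℕ}
    (w : Fin m → shallowNets σ (Fin p → ℝ)) :
    ∃ (n : ℕ) (A : Matrix (Fin m) (Fin n) ℝ) (B : Matrix (Fin n) (Fin p) ℝ) (c : Fin n → ℝ),
      ∀ x, (A.mulVec fun i => σ (B.mulVec x i + c i)) = fun k => (w k : (Fin p → ℝ) → ℝ) x := by
  have hΛ (Λ : (Fin p → ℝ) →L[ℝ] ℝ) (x : Fin p → ℝ) :
      ∑ j, Λ (fun j' => if j = j' then 1 else 0) * x j = Λ x := by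
    rw [← ContinuousLinearMap.coe_coe, Λ.toLinearMap.pi_apply_eq_sum_univ x]
    simp only [smul_eq_mul, mul_comm, ContinuousLinearMap.coe_coe]
  classical
  choose a ha using fun k => Finsupp.mem_span_range_iff_exists_finsupp.1 (w k).2
  -- the hidden units of all `m` networks, pooled
  set T := Finset.univ.biUnion fun k => (a k).support
  let e := T.equivFin.symm
  refine ⟨T.card, fun k i => a k (e i), fun i j => (e i).1.1 fun j' => if j = j' then 1 else 0,
    fun i => (e i).1.2, fun x => funext fun k => ?_⟩
  have hsupp : (a k).support ⊆ T :=
    Finset.subset_biUnion_of_mem (fun k => (a k).support) (Finset.mem_univ k)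
  rw [← ha k, Finsupp.sum_of_support_subset (a k) hsupp _ (by simp), Finset.sum_apply,
    ← Finset.sum_coe_sort T, ← e.sum_comp]
  simp [Matrix.mulVec, dotProduct, hΛ]

theorem approximation_theorem_for_IPDS_general
    (p Kstar : ℕ) (M : ℝ)
    (Y : Set (EuclideanSpace ℝ (Fin Kstar)))
    (fstar : (Fin p → ℝ) → EuclideanSpace ℝ (Fin Kstar))
    (hfstar_cont : ContinuousOn fstar {x : Fin p → ℝ | ∀ i, |x i| ≤ M})
    (hfstar_maps : ∀ x ∈ {x : Fin p → ℝ | ∀ i, |x i| ≤ M}, fstar x ∈ Y)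
    (gstar : EuclideanSpace ℝ (Fin Kstar) → EuclideanSpace ℝ (Fin Kstar) → ℝ)
    (hgstar_symm : ∀ y ∈ Y, ∀ y' ∈ Y, gstar y y' = gstar y' y)
    (hgstar_cont : ContinuousOn
      (fun yy : EuclideanSpace ℝ (Fin Kstar) × EuclideanSpace ℝ (Fin Kstar) =>
        gstar yy.1 yy.2) (Y ×ˢ Y))
    (σ : ℝ → ℝ)
    (hσ : (σ = fun z => max 0 z) ∨
      ((∃ a b, σ a ≠ σ b) ∧ Continuous σ ∧ (∃ C, ∀ z, |σ z| ≤ C) ∧ Monotone σ)) :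
    ∀ ε > (0 : ℝ), ∃ (Kp Km mp mm : ℕ) (A : Matrix (Fin Kp) (Fin mp) ℝ)
      (B : Matrix (Fin mp) (Fin p) ℝ) (c : Fin mp → ℝ)
      (E : Matrix (Fin Km) (Fin mm) ℝ) (F : Matrix (Fin mm) (Fin p) ℝ) (o : Fin mm → ℝ),
      ∀ x ∈ {x : Fin p → ℝ | ∀ i, |x i| ≤ M}, ∀ x' ∈ {x : Fin p → ℝ | ∀ i, |x i| ≤ M},
        |gstar (fstar x) (fstar x')
          - (dotProduct
              (A.mulVec fun i => σ (B.mulVec x i + c i))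
              (A.mulVec fun i => σ (B.mulVec x' i + c i))
            - dotProduct
              (E.mulVec fun i => σ (F.mulVec x i + o i))
              (E.mulVec fun i => σ (F.mulVec x' i + o i)))| < ε := by
  intro ε hε
  set K := {x : Fin p → ℝ | ∀ i, |x i| ≤ M}
  have hK : IsCompact K := by
    have h : K = Set.univ.pi fun _ => Set.Icc (-M) M := by
      ext
      simp only [K, Set.mem_ofPred_eq, Set.mem_univ_pi, Set.mem_Icc, abs_le]
    rw [h]
    exact isCompact_univ_pi fun _ => isCompact_Icc
  have hV (g : ℝ → ℝ) (hg : Continuous g) (Λ : (Fin p → ℝ) →L[ℝ] ℝ) :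
      g ∘ Λ ∈ (shallowNets σ (Fin p → ℝ)).uniformClosureOn K := by
    rcases hσ with rfl | ⟨hne, -, hbdd, hmono⟩
    · exact comp_mem_uniformClosureOn_shallowNets_relu hK hg Λ
    · exact comp_mem_uniformClosureOn_shallowNets_of_monotone hne hbdd hmono hK hg Λ
  have hH : ContinuousOn (fun q : (Fin p → ℝ) × (Fin p → ℝ) => gstar (fstar q.1) (fstar q.2))
      (K ×ˢ K) :=
    hgstar_cont.comp (hfstar_cont.prodMap hfstar_cont)
      fun q hq => ⟨hfstar_maps _ hq.1, hfstar_maps _ hq.2⟩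
  obtain ⟨_, ⟨m, n, w, v, rfl⟩, hk⟩ := mem_uniformClosureOn_differenceKernels hK hV hH
    (fun x hx x' hx' => hgstar_symm _ (hfstar_maps x hx) _ (hfstar_maps x' hx'))
    (ε / 2) (half_pos hε)
  obtain ⟨mp, A, B, c, hA⟩ := exists_matrix_eq_of_mem_shallowNets w
  obtain ⟨mm, E, F, o, hE⟩ := exists_matrix_eq_of_mem_shallowNets v
  refine ⟨m, n, mp, mm, A, B, c, E, F, o, fun x hx x' hx' => ?_⟩
  simp only [hA, hE, dotProduct]
  exact (hk (x, x') ⟨hx, hx'⟩).trans_lt (half_lt_self hε)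

/-- Approximation theorem for the inner-product difference similarity (IPDS) model:
for a continuous `f* : [-M,M]ᵖ → Y` into a compact `Y ⊆ ℝ^{K*}` and a kernel
`g* : Y × Y → ℝ` dominated by some positive definite kernel `g` (i.e. `g - g*` is PD),
and an activation `σ` which is either ReLU or non-constant, continuous, bounded and
monotone increasing, for every `ε > 0` there are one-hidden-layer neural networks
`f_NN(x) = A σ(Bx + c)` and `r_NN(x) = E σ(Fx + o)` such that
`|g*(f*(x), f*(x')) - (⟨f_NN(x), f_NN(x')⟩ - ⟨r_NN(x), r_NN(x')⟩)| < ε` on the cube. -/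
theorem approximation_theorem_for_IPDS
    (p Kstar : ℕ) (M : ℝ) (hM : 0 < M)
    (Y : Set (EuclideanSpace ℝ (Fin Kstar))) (hY : IsCompact Y)
    (fstar : (Fin p → ℝ) → EuclideanSpace ℝ (Fin Kstar))
    (hfstar_cont : ContinuousOn fstar {x : Fin p → ℝ | ∀ i, |x i| ≤ M})
    (hfstar_maps : ∀ x ∈ {x : Fin p → ℝ | ∀ i, |x i| ≤ M}, fstar x ∈ Y)
    (gstar : EuclideanSpace ℝ (Fin Kstar) → EuclideanSpace ℝ (Fin Kstar) → ℝ)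
    (hgstar_symm : ∀ y ∈ Y, ∀ y' ∈ Y, gstar y y' = gstar y' y)
    (hgstar_cont : ContinuousOn
      (fun yy : EuclideanSpace ℝ (Fin Kstar) × EuclideanSpace ℝ (Fin Kstar) =>
        gstar yy.1 yy.2) (Y ×ˢ Y))
    -- `gstar` is dominated by some positive definite kernel `g`:
    (g : EuclideanSpace ℝ (Fin Kstar) → EuclideanSpace ℝ (Fin Kstar) → ℝ)
    (hg_symm : ∀ y ∈ Y, ∀ y' ∈ Y, g y y' = g y' y)
    (hg_cont : ContinuousOn
      (fun yy : EuclideanSpace ℝ (Fin Kstar) × EuclideanSpace ℝ (Fin Kstar) =>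
        g yy.1 yy.2) (Y ×ˢ Y))
    (hg_pd : ∀ (n : ℕ) (c : Fin n → ℝ) (y : Fin n → EuclideanSpace ℝ (Fin Kstar)),
      (∀ i, y i ∈ Y) → 0 ≤ ∑ i, ∑ j, c i * c j * g (y i) (y j))
    (hdom_pd : ∀ (n : ℕ) (c : Fin n → ℝ) (y : Fin n → EuclideanSpace ℝ (Fin Kstar)),
      (∀ i, y i ∈ Y) → 0 ≤ ∑ i, ∑ j, c i * c j * (g (y i) (y j) - gstar (y i) (y j)))
    (σ : ℝ → ℝ)
    (hσ : (σ = fun z => max 0 z) ∨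
      ((∃ a b, σ a ≠ σ b) ∧ Continuous σ ∧ (∃ C, ∀ z, |σ z| ≤ C) ∧ Monotone σ)) :
    ∀ ε > (0 : ℝ), ∃ (Kp Km mp mm : ℕ) (A : Matrix (Fin Kp) (Fin mp) ℝ)
      (B : Matrix (Fin mp) (Fin p) ℝ) (c : Fin mp → ℝ)
      (E : Matrix (Fin Km) (Fin mm) ℝ) (F : Matrix (Fin mm) (Fin p) ℝ) (o : Fin mm → ℝ),
      ∀ x ∈ {x : Fin p → ℝ | ∀ i, |x i| ≤ M}, ∀ x' ∈ {x : Fin p → ℝ | ∀ i, |x i| ≤ M},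
        |gstar (fstar x) (fstar x')
          - (dotProduct
              (A.mulVec fun i => σ (B.mulVec x i + c i))
              (A.mulVec fun i => σ (B.mulVec x' i + c i))
            - dotProduct
              (E.mulVec fun i => σ (F.mulVec x i + o i))
              (E.mulVec fun i => σ (F.mulVec x' i + o i)))| < ε :=
  approximation_theorem_for_IPDS_general p Kstar M Y fstar hfstar_cont hfstar_maps gstar hgstar_symm
    hgstar_cont σ hσ
end
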